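/- arXiv:0909.4308 — 11 statements merged into one kernel-verified Lean document; each statement's English description precedes it below -/
import Mathlib

section
/- Let V be a real inner product space with inner product norm ‖·‖, let A : V → V be a bounded linear operator, and let k, m ∈ ℕ with k, m ≥ 1. Suppose (v_n)_{n≥1} is a bounded sequence in V, there exists M > 0 with ‖A^n v‖ ≤ M‖v‖ for all n ∈ ℕ and all v ∈ V, lim_{n→∞} ‖v_n − A v_{n−k}‖ = 0, and the sequence of operators A^{n+m} − A^n converges to 0 in operator norm as n → ∞. Then lim_{n→∞} ‖v_n − v_{n−km}‖ = 0. -/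
/-!
Iterating `v (n + k) ≈ A (v n)` a fixed number `j` of times gives `v (n + j * k) ≈ A ^ j (v n)`.
Hence `A ^ m (v n) - v n` equals `(A ^ (j + m) - A ^ j) (v (n - j * k))` up to an error that
vanishes as `n → ∞`; as `v` is bounded, choosing `j` with `‖A ^ (j + m) - A ^ j‖` small shows
`A ^ m (v n) - v n → 0`. Adding `v (n + m * k) - A ^ m (v n) → 0` (the case `j = m`) gives the claim.
-/

open Filter Topology

theorem tendsto_sub_pow_apply_of_tendsto_sub_apply {R E : Type*} [Semiring R]
    [TopologicalSpace E] [AddCommGroup E] [IsTopologicalAddGroup E] [Module R E]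
    {A : E →L[R] E} {v : ℕ → E} {k : ℕ}
    (hv : Tendsto (fun n => v (n + k) - A (v n)) atTop (𝓝 0)) (j : ℕ) :
    Tendsto (fun n => v (n + j * k) - (A ^ j) (v n)) atTop (𝓝 0) := by
  induction j with
  | zero => simpa using tendsto_const_nhds
  | succ j ih =>
    have hpush : Tendsto (fun n => (A ^ j) (v (n + k) - A (v n))) atTop (𝓝 0) :=
      ((A ^ j).continuous.tendsto' 0 0 (map_zero _)).comp hv
    have hsplit : ∀ n, v (n + k + j * k) - (A ^ j) (v (n + k)) + (A ^ j) (v (n + k) - A (v n))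
        = v (n + (j + 1) * k) - (A ^ (j + 1)) (v n) := fun n => by
      rw [show n + (j + 1) * k = n + k + j * k by ring, pow_succ, mul_apply_eq_comp, map_sub]
      abel
    simpa only [Function.comp_def, hsplit, add_zero] using
      (ih.comp (tendsto_add_atTop_nat k)).add hpush

theorem tendsto_pow_apply_sub_self {𝕜 E : Type*} [NontriviallyNormedField 𝕜]
    [NormedAddCommGroup E] [NormedSpace 𝕜 E] {A : E →L[𝕜] E} {v : ℕ → E} {k m : ℕ}
    (hv : Tendsto (fun n => v (n + k) - A (v n)) atTop (𝓝 0))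
    (hbdd : ∃ C : ℝ, ∀ n, ‖v n‖ ≤ C)
    (hA : Tendsto (fun j => A ^ (j + m) - A ^ j) atTop (𝓝 0)) :
    Tendsto (fun n => (A ^ m) (v n) - v n) atTop (𝓝 0) := by
  obtain ⟨C, hC⟩ := hbdd
  refine Metric.tendsto_atTop.2 fun ε hε => ?_
  obtain ⟨j, hj⟩ : ∃ j, ‖A ^ (j + m) - A ^ j‖ * C < ε / 2 := by
    have := hA.norm.mul_const C
    rw [norm_zero, zero_mul] at this
    exact (this.eventually (gt_mem_nhds (half_pos hε))).exists
  have herr := ((A ^ m - 1).continuous.tendsto' 0 0 (map_zero _)).comp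
    (tendsto_sub_pow_apply_of_tendsto_sub_apply hv j)
  obtain ⟨N, hN⟩ := Metric.tendsto_atTop.1 herr (ε / 2) (half_pos hε)
  refine ⟨N + j * k, fun n hn => ?_⟩
  obtain ⟨p, rfl⟩ : ∃ p, n = p + j * k := ⟨n - j * k, by omega⟩
  have hdecomp : (A ^ m) (v (p + j * k)) - v (p + j * k)
      = (A ^ (j + m) - A ^ j) (v p) + (A ^ m - 1) (v (p + j * k) - (A ^ j) (v p)) := by
    simp only [add_comm j m, pow_add, sub_apply, mul_apply_eq_comp, one_apply_eq_self, map_sub]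
    abel
  have hN' := hN p (by omega)
  rw [Function.comp_apply, dist_zero_right] at hN'
  rw [dist_zero_right]
  calc ‖(A ^ m) (v (p + j * k)) - v (p + j * k)‖
      ≤ ‖(A ^ (j + m) - A ^ j) (v p)‖ + ‖(A ^ m - 1) (v (p + j * k) - (A ^ j) (v p))‖ :=
        hdecomp ▸ norm_add_le _ _
    _ ≤ ‖A ^ (j + m) - A ^ j‖ * C + ‖(A ^ m - 1) (v (p + j * k) - (A ^ j) (v p))‖ := by
        gcongr
        exact (A ^ (j + m) - A ^ j).le_opNorm_of_le (hC p)
    _ < ε := by linarith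

theorem stmt_3_general {V : Type*} [NormedAddCommGroup V] [InnerProductSpace ℝ V]
    (A : V →L[ℝ] V) (k m : ℕ)
    (v : ℕ → V) (hbdd : ∃ C : ℝ, ∀ n, ‖v n‖ ≤ C)
    (hlim : Tendsto (fun n => ‖v (n + k) - A (v n)‖) atTop (nhds 0))
    (hA : Tendsto (fun n => ‖A ^ (n + m) - A ^ n‖) atTop (nhds 0)) :
    Tendsto (fun n => ‖v (n + k * m) - v n‖) atTop (nhds 0) := by
  have hv := tendsto_zero_iff_norm_tendsto_zero.2 hlim
  have hstep := tendsto_sub_pow_apply_of_tendsto_sub_apply hv m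
  have hdrift := tendsto_pow_apply_sub_self hv hbdd (tendsto_zero_iff_norm_tendsto_zero.2 hA)
  refine tendsto_zero_iff_norm_tendsto_zero.1 ?_
  simpa only [mul_comm m k, sub_add_sub_cancel, add_zero] using hstep.add hdrift

/-- Let `V` be a real inner product space, `A : V → V` a bounded linear
operator, and `k, m ≥ 1`. Suppose `(v_n)` is a bounded sequence in `V`, there is `M > 0`
with `‖A^n v‖ ≤ M‖v‖` for all `n` and `v`, `‖v_n − A v_{n−k}‖ → 0`, and
`A^{n+m} − A^n → 0` in operator norm. Then `‖v_n − v_{n−km}‖ → 0`. -/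
theorem stmt_3 {V : Type*} [NormedAddCommGroup V] [InnerProductSpace ℝ V]
    (A : V →L[ℝ] V) (k m : ℕ) (hk : 1 ≤ k) (hm : 1 ≤ m)
    (v : ℕ → V) (hbdd : ∃ C : ℝ, ∀ n, ‖v n‖ ≤ C)
    (hM : ∃ M > (0 : ℝ), ∀ (n : ℕ) (w : V), ‖(A ^ n) w‖ ≤ M * ‖w‖)
    (hlim : Tendsto (fun n => ‖v (n + k) - A (v n)‖) atTop (nhds 0))
    (hA : Tendsto (fun n => ‖A ^ (n + m) - A ^ n‖) atTop (nhds 0)) :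
    Tendsto (fun n => ‖v (n + k * m) - v n‖) atTop (nhds 0) :=
  stmt_3_general A k m v hbdd hlim hA
end

section
/- Consider the general damped system with a real symmetric m×m matrix A having nonnegative entries. If the spectral radius of A is equal to 1, then every solution (v_n) satisfies lim_{n→∞} ‖v_n − A v_{n−k}‖ = 0. -/
/-!
A real symmetric matrix of spectral radius at most `1` is a contraction for the Euclidean norm.
For vectors with `0 ≤ u ≤ y` componentwise, `‖u - y‖² + ‖u‖² ≤ ‖y‖²`; applied to
`u = v (n + k)`, `y = A v n` this gives `‖v (n + k) - A v n‖² ≤ ‖v n‖² - ‖v (n + k)‖²`.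
The right-hand sides are nonnegative and telescope along each residue class modulo `k`,
so they are summable and tend to `0`.
-/

open Matrix Filter

/-- The Euclidean norm on `ℝ^m`. -/
noncomputable def euclNorm {m : ℕ} (w : Fin m → ℝ) : ℝ :=
  Real.sqrt (∑ i, (w i) ^ 2)

theorem LinearMap.IsSymmetric.norm_apply_sq_le {𝕜 E : Type*} [RCLike 𝕜] [NormedAddCommGroup E]
    [InnerProductSpace 𝕜 E] [FiniteDimensional 𝕜 E] {T : E →ₗ[𝕜] E} (hT : T.IsSymmetric)
    {n : ℕ} (hn : Module.finrank 𝕜 E = n) {c : ℝ} (hc : ∀ i, |hT.eigenvalues hn i| ≤ c) (x : E) :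
    ‖T x‖ ^ 2 ≤ c ^ 2 * ‖x‖ ^ 2 := by
  set b := hT.eigenvectorBasis hn
  rw [← b.repr.norm_map, ← b.repr.norm_map x, EuclideanSpace.norm_sq_eq, EuclideanSpace.norm_sq_eq,
    Finset.mul_sum]
  refine Finset.sum_le_sum fun i _ => ?_
  rw [hT.eigenvectorBasis_apply_self_apply, norm_mul, mul_pow, RCLike.norm_ofReal]
  gcongr
  exact hc i

theorem spectrum.nnnorm_le_spectralRadius {𝕜 A : Type*} [NormedField 𝕜] [Ring A] [Algebra 𝕜 A]
    {a : A} {z : 𝕜} (hz : z ∈ spectrum 𝕜 a) : (‖z‖₊ : ENNReal) ≤ spectralRadius 𝕜 a :=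
  le_iSup₂ (f := fun z (_ : z ∈ spectrum 𝕜 a) => (‖z‖₊ : ENNReal)) z hz

theorem euclNorm_eq_norm {m : ℕ} (w : Fin m → ℝ) : euclNorm w = ‖WithLp.toLp 2 w‖ := by
  simp [euclNorm, EuclideanSpace.norm_eq]

theorem euclNorm_nonneg {m : ℕ} (w : Fin m → ℝ) : 0 ≤ euclNorm w := Real.sqrt_nonneg _

theorem euclNorm_sq {m : ℕ} (w : Fin m → ℝ) : euclNorm w ^ 2 = ∑ i, w i ^ 2 :=
  Real.sq_sqrt (Finset.sum_nonneg fun _ _ => sq_nonneg _)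

theorem Matrix.IsSymm.euclNorm_mulVec_le {m : ℕ} {A : Matrix (Fin m) (Fin m) ℝ} (hA : A.IsSymm)
    (hρ : spectralRadius ℝ A ≤ 1) (w : Fin m → ℝ) : euclNorm (A *ᵥ w) ≤ euclNorm w := by
  have hT : (toEuclideanLin A).IsSymmetric := isSymmetric_toEuclideanLin_iff.2 hA
  have hc : ∀ i, |hT.eigenvalues finrank_euclideanSpace_fin i| ≤ 1 := by
    intro i
    have hz := (hT.hasEigenvalue_eigenvalues finrank_euclideanSpace_fin i).mem_spectrum
    rw [spectrum_toLpLin] at hz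
    exact_mod_cast (spectrum.nnnorm_le_spectralRadius hz).trans hρ
  have := hT.norm_apply_sq_le finrank_euclideanSpace_fin hc (WithLp.toLp 2 w)
  rw [euclNorm_eq_norm, euclNorm_eq_norm,
    ← pow_le_pow_iff_left₀ (norm_nonneg _) (norm_nonneg _) two_ne_zero]
  simpa using this

theorem euclNorm_sub_sq_add_sq_le {m : ℕ} {u y : Fin m → ℝ} (hu : 0 ≤ u) (huy : u ≤ y) :
    euclNorm (u - y) ^ 2 + euclNorm u ^ 2 ≤ euclNorm y ^ 2 := by
  simp only [euclNorm_sq, ← Finset.sum_add_distrib]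
  refine Finset.sum_le_sum fun i _ => ?_
  have hui : 0 ≤ u i := hu i
  have huyi : u i ≤ y i := huy i
  -- `(u - y)² + u² - y² = 2 u (u - y) ≤ 0`
  rw [Pi.sub_apply]
  nlinarith

theorem tendsto_sub_shift_of_nonneg_of_shift_le {g : ℕ → ℝ} (k : ℕ) (hg : ∀ n, 0 ≤ g n)
    (hshift : ∀ n, g (n + k) ≤ g n) : Tendsto (fun n => g n - g (n + k)) atTop (nhds 0) := by
  refine (summable_of_sum_range_le (c := ∑ n ∈ Finset.range k, g n)
    (fun n => sub_nonneg.2 (hshift n)) fun N => ?_).tendsto_atTop_zero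
  have htele : ∑ n ∈ Finset.range N, (g n - g (n + k)) =
      ∑ n ∈ Finset.range k, g n - ∑ n ∈ Finset.range k, g (N + n) := by
    have h1 := Finset.sum_range_add g k N
    rw [add_comm k N, Finset.sum_range_add g N k] at h1
    simp only [Finset.sum_sub_distrib, add_comm _ k]
    linarith
  have : 0 ≤ ∑ n ∈ Finset.range k, g (N + n) := Finset.sum_nonneg fun n _ => hg _
  linarith

theorem stmt_5_general {m k : ℕ}
    (A : Matrix (Fin m) (Fin m) ℝ) (hsymm : A.IsSymm)
    (hρ : spectralRadius ℝ A = 1)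
    (v : ℕ → Fin m → ℝ) (hnn : ∀ n i, 0 ≤ v n i)
    (hrec : ∀ n, k ≤ n → ∀ i, v n i ≤ (A *ᵥ v (n - k)) i) :
    Tendsto (fun n => euclNorm (v (n + k) - A *ᵥ v n)) atTop (nhds 0) := by
  have hstep : ∀ n, euclNorm (v (n + k) - A *ᵥ v n) ^ 2 ≤
      euclNorm (v n) ^ 2 - euclNorm (v (n + k)) ^ 2 := fun n => by
    have hdamp := euclNorm_sub_sq_add_sq_le (hnn (n + k)) fun i => by
      simpa using hrec (n + k) (Nat.le_add_left k n) i
    have hcontr := pow_le_pow_left₀ (euclNorm_nonneg _) (hsymm.euclNorm_mulVec_le hρ.le (v n)) 2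
    linarith
  have hlim := tendsto_sub_shift_of_nonneg_of_shift_le k (fun n => sq_nonneg (euclNorm (v n)))
    fun n => sub_nonneg.1 ((sq_nonneg _).trans (hstep n))
  simpa [Real.sqrt_sq, euclNorm_nonneg] using (squeeze_zero (fun n => sq_nonneg _) hstep hlim).sqrt

/-- General damped system: `v : ℕ → [0,∞)^m` with
`0 ≤ v_{n,i} ≤ (A v_{n−k})_i` for all `n ≥ k`, where `A` is real symmetric with
nonnegative entries. If the spectral radius of `A` equals `1`, then every solution
satisfies `lim_{n→∞} ‖v_n − A v_{n−k}‖ = 0` (Euclidean norm). -/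
theorem stmt_5 {m k : ℕ} (hm : 1 ≤ m) (hk : 2 ≤ k)
    (A : Matrix (Fin m) (Fin m) ℝ) (hsymm : A.IsSymm) (hnnA : ∀ i j, 0 ≤ A i j)
    (hρ : spectralRadius ℝ A = 1)
    (v : ℕ → Fin m → ℝ) (hnn : ∀ n i, 0 ≤ v n i)
    (hrec : ∀ n, k ≤ n → ∀ i, v n i ≤ (A *ᵥ v (n - k)) i) :
    Tendsto (fun n => euclNorm (v (n + k) - A *ᵥ v n)) atTop (nhds 0) :=
  stmt_5_general A hsymm hρ v hnn hrec
end

section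
/- Consider the rational vector system with a real symmetric m×m matrix A having nonnegative entries and damping vectors q_{ij} ∈ [0,∞)^m. If the spectral radius of A is strictly greater than 1, then there exists a choice of nonnegative initial conditions v_0,…,v_{k−1} such that the corresponding solution (v_n) has the property that the sequence (‖v_n‖)_{n=1}^∞ is unbounded. -/
/-!
A real eigenvalue `μ` of `A` with `|μ| > 1` has an eigenvector `x`. Since `A ≥ 0` entrywise,
`|μ| • |x| ≤ A *ᵥ |x|`, hence `|μ| ^ p • |x| ≤ A ^ p *ᵥ |x|` grows geometrically. Placing
`A ^ p *ᵥ |x|` at time `k * p` and `0` at all other times gives a solution: at a multiple of `k`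
every delayed value `v (n - j)`, `0 < j < k`, in the denominator vanishes, so the system acts
there as the linear map `A`.
-/

open Matrix Filter

/-- `v` is a solution of the rational vector system
`v_{n,i} = (A v_{n−k})_i / (1 + Σ_{j=1}^{k−1} ⟨q_{ij}, v_{n−j}⟩)` for `n ≥ k`,
with nonnegative values. -/
def IsRationalSolution {m : ℕ} (k : ℕ) (A : Matrix (Fin m) (Fin m) ℝ)
    (q : Fin m → ℕ → Fin m → ℝ) (v : ℕ → Fin m → ℝ) : Prop :=
  (∀ n i, 0 ≤ v n i) ∧
  ∀ n, k ≤ n → ∀ i,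
    v n i = (A *ᵥ v (n - k)) i / (1 + ∑ j ∈ Finset.Ico 1 k, (q i j) ⬝ᵥ v (n - j))

theorem exists_mem_spectrum_lt_nnnorm {𝕜 B : Type*} [NormedField 𝕜] [Ring B] [Algebra 𝕜 B]
    {a : B} {r : ENNReal} (h : r < spectralRadius 𝕜 a) :
    ∃ μ ∈ spectrum 𝕜 a, r < ‖μ‖₊ := by
  simpa only [spectralRadius, lt_iSup_iff, exists_prop] using h

theorem Matrix.exists_mulVec_eq_smul_of_mem_spectrum {K n : Type*} [Field K] [Fintype n]
    [DecidableEq n] {A : Matrix n n K} {μ : K} (h : μ ∈ spectrum K A) :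
    ∃ x, x ≠ 0 ∧ A *ᵥ x = μ • x := by
  rw [← spectrum_toLin', ← Module.End.hasEigenvalue_iff_mem_spectrum] at h
  obtain ⟨x, hx_mem, hx_ne⟩ := h.exists_hasEigenvector
  exact ⟨x, hx_ne, Module.End.mem_eigenspace_iff.mp hx_mem⟩

section NonnegMatrix

variable {n R : Type*} [Fintype n] [CommRing R] [LinearOrder R] [IsStrictOrderedRing R]
  {A : Matrix n n R}

theorem Matrix.mulVec_mono_of_nonneg (hA : ∀ i j, 0 ≤ A i j) {y z : n → R} (h : y ≤ z) :
    A *ᵥ y ≤ A *ᵥ z := fun i =>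
  Finset.sum_le_sum fun j _ => mul_le_mul_of_nonneg_left (h j) (hA i j)

theorem Matrix.mulVec_nonneg_of_nonneg (hA : ∀ i j, 0 ≤ A i j) {y : n → R} (hy : 0 ≤ y) :
    0 ≤ A *ᵥ y := by
  simpa using mulVec_mono_of_nonneg hA hy

theorem Matrix.pow_mulVec_nonneg_of_nonneg [DecidableEq n] (hA : ∀ i j, 0 ≤ A i j)
    {y : n → R} (hy : 0 ≤ y) (p : ℕ) : 0 ≤ (A ^ p) *ᵥ y := by
  induction p with
  | zero => simpa using hy
  | succ p ih => simpa only [pow_succ', ← mulVec_mulVec] using mulVec_nonneg_of_nonneg hA ih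

theorem Matrix.abs_smul_abs_le_mulVec_abs (hA : ∀ i j, 0 ≤ A i j) {μ : R} {x : n → R}
    (hx : A *ᵥ x = μ • x) : |μ| • |x| ≤ A *ᵥ |x| := fun i => by
  calc |μ| * |x i| = |(A *ᵥ x) i| := by rw [hx, Pi.smul_apply, smul_eq_mul, abs_mul]
    _ ≤ ∑ j, |A i j * x j| := Finset.abs_sum_le_sum_abs _ _
    _ = (A *ᵥ |x|) i := by
      simp only [abs_mul, abs_of_nonneg (hA i _)]
      rfl

theorem Matrix.pow_smul_le_pow_mulVec [DecidableEq n] (hA : ∀ i j, 0 ≤ A i j) {c : R}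
    (hc : 0 ≤ c) {u : n → R} (h : c • u ≤ A *ᵥ u) (p : ℕ) : c ^ p • u ≤ (A ^ p) *ᵥ u := by
  induction p with
  | zero => simp
  | succ p ih =>
    calc c ^ (p + 1) • u = c ^ p • (c • u) := by rw [pow_succ, mul_smul]
      _ ≤ c ^ p • (A *ᵥ u) := smul_le_smul_of_nonneg_left h (pow_nonneg hc p)
      _ = A *ᵥ (c ^ p • u) := (mulVec_smul A _ u).symm
      _ ≤ A *ᵥ ((A ^ p) *ᵥ u) := mulVec_mono_of_nonneg hA ih
      _ = (A ^ (p + 1)) *ᵥ u := by rw [mulVec_mulVec, pow_succ']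

end NonnegMatrix

theorem abs_le_euclNorm {m : ℕ} (w : Fin m → ℝ) (i : Fin m) : |w i| ≤ euclNorm w :=
  Real.abs_le_sqrt <| Finset.single_le_sum (fun j _ => sq_nonneg (w j)) (Finset.mem_univ i)

noncomputable def sparseOrbit {m : ℕ} (k : ℕ) (A : Matrix (Fin m) (Fin m) ℝ) (u : Fin m → ℝ)
    (n : ℕ) : Fin m → ℝ :=
  if k ∣ n then (A ^ (n / k)) *ᵥ u else 0

section SparseOrbit

variable {m k : ℕ} {A : Matrix (Fin m) (Fin m) ℝ} {u : Fin m → ℝ}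

theorem sparseOrbit_mul (hk : 0 < k) (p : ℕ) : sparseOrbit k A u (k * p) = (A ^ p) *ᵥ u := by
  simp [sparseOrbit, Nat.mul_div_cancel_left p hk]

theorem sparseOrbit_nonneg (hA : ∀ i j, 0 ≤ A i j) (hu : 0 ≤ u) (n : ℕ) :
    0 ≤ sparseOrbit k A u n := by
  unfold sparseOrbit
  split_ifs
  · exact pow_mulVec_nonneg_of_nonneg hA hu _
  · rfl

theorem isRationalSolution_sparseOrbit (hk : 0 < k) (hA : ∀ i j, 0 ≤ A i j) (hu : 0 ≤ u)
    (q : Fin m → ℕ → Fin m → ℝ) : IsRationalSolution k A q (sparseOrbit k A u) := by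
  refine ⟨fun n => sparseOrbit_nonneg hA hu n, fun n hn i => ?_⟩
  obtain ⟨n, rfl⟩ := Nat.exists_eq_add_of_le' hn
  by_cases hdvd : k ∣ n
  · have hdamp : ∀ j ∈ Finset.Ico 1 k, q i j ⬝ᵥ sparseOrbit k A u (n + k - j) = 0 := by
      intro j hj
      obtain ⟨hj1, hjk⟩ := Finset.mem_Ico.mp hj
      have hnot : ¬ k ∣ n + k - j := by
        rw [Nat.add_sub_assoc hjk.le, Nat.dvd_add_right hdvd]
        exact Nat.not_dvd_of_pos_of_lt (by omega) (by omega)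
      simp [sparseOrbit, hnot]
    rw [Finset.sum_eq_zero hdamp, add_zero, div_one, Nat.add_sub_cancel]
    simp [sparseOrbit, hdvd, Nat.add_div_right n hk, pow_succ', mulVec_mulVec]
  · have hdvd' : ¬ k ∣ n + k := by rwa [Nat.dvd_add_self_right]
    simp [sparseOrbit, hdvd, hdvd']

end SparseOrbit

theorem stmt_8_general {m k : ℕ} (hk : 2 ≤ k)
    (A : Matrix (Fin m) (Fin m) ℝ) (hnnA : ∀ i j, 0 ≤ A i j)
    (q : Fin m → ℕ → Fin m → ℝ)
    (hρ : 1 < spectralRadius ℝ A) :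
    ∃ v : ℕ → Fin m → ℝ, IsRationalSolution k A q v ∧
      ¬ BddAbove (Set.range fun n => euclNorm (v n)) := by
  obtain ⟨μ, hμ, hμ1⟩ := exists_mem_spectrum_lt_nnnorm hρ
  replace hμ1 : 1 < |μ| := by exact_mod_cast hμ1
  obtain ⟨x, hx0, hAx⟩ := exists_mulVec_eq_smul_of_mem_spectrum hμ
  obtain ⟨i, hi⟩ := Function.ne_iff.mp hx0
  have hgrowth (p : ℕ) : |μ| ^ p * |x i| ≤ euclNorm (sparseOrbit k A |x| (k * p)) := by
    rw [sparseOrbit_mul (by omega)]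
    calc |μ| ^ p * |x i| ≤ ((A ^ p) *ᵥ |x|) i :=
          pow_smul_le_pow_mulVec hnnA (abs_nonneg μ) (abs_smul_abs_le_mulVec_abs hnnA hAx) p i
      _ ≤ euclNorm ((A ^ p) *ᵥ |x|) := (le_abs_self _).trans (abs_le_euclNorm _ i)
  refine ⟨sparseOrbit k A |x|, isRationalSolution_sparseOrbit (by omega) hnnA (abs_nonneg x) q,
    ?_⟩
  rintro ⟨M, hM⟩
  obtain ⟨p, hp⟩ := pow_unbounded_of_one_lt (M / |x i|) hμ1
  rw [div_lt_iff₀ (abs_pos.mpr hi)] at hp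
  exact (hgrowth p).not_gt (hp.trans_le' (hM ⟨k * p, rfl⟩))

/-- Rational vector system with real symmetric `A` having nonnegative
entries and nonnegative damping vectors `q_{ij}`. If the spectral radius of `A` is
strictly greater than `1`, then there is a choice of nonnegative initial conditions whose
solution `(v_n)` has `(‖v_n‖)` unbounded. -/
theorem stmt_8 {m k : ℕ} (hm : 1 ≤ m) (hk : 2 ≤ k)
    (A : Matrix (Fin m) (Fin m) ℝ) (hsymm : A.IsSymm) (hnnA : ∀ i j, 0 ≤ A i j)
    (q : Fin m → ℕ → Fin m → ℝ) (hq : ∀ i j l, 0 ≤ q i j l)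
    (hρ : 1 < spectralRadius ℝ A) :
    ∃ v : ℕ → Fin m → ℝ, IsRationalSolution k A q v ∧
      ¬ BddAbove (Set.range fun n => euclNorm (v n)) :=
  stmt_8_general hk A hnnA q hρ
end

section
/- Consider the rational vector system with a real symmetric m×m matrix A all of whose entries are strictly positive and damping vectors q_{ij} ∈ [0,∞)^m. If the spectral radius of A is equal to 1, then every solution (v_n) converges to a periodic solution of (not necessarily prime) period k: there exists a sequence p : ℕ → [0,∞)^m with p_{n+k} = p_n for all n such that lim_{n→∞} ‖v_n − p_n‖ = 0. -/
open Matrix Filter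

/-!
Since the denominators are at least `1`, each of the `k` interleaved subsequences
`w t = v (r + t * k)` satisfies `0 ≤ w (t + 1) ≤ A *ᵥ w t`. For symmetric `A` the spectral radius
is the Euclidean operator norm, so `A` is a contraction. A Perron argument (`|x| ≤ A *ᵥ |x|` for an
eigenvector of eigenvalue `±1`, and the strict triangle inequality for vectors of mixed sign)
gives a unit vector `u > 0` fixed by `A` on whose orthogonal complement `A` contracts strictly,
hence, by compactness, by a uniform factor `μ < 1`. Then `⟪u, w t⟫` is nonincreasing and the
orthogonal part `r t` of `w t` satisfies
`‖r (t + 1)‖² ≤ μ² ‖r t‖² + (⟪u, w t⟫² - ⟪u, w (t + 1)⟫²)`, so `∑ ‖r t‖²` is finite and `w t`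
converges to a multiple of `u`.
-/

open Topology WithLp
open scoped RealInnerProductSpace

theorem summable_of_succ_le_mul_add_sub {s a : ℕ → ℝ} {c : ℝ} (hs : ∀ n, 0 ≤ s n)
    (ha : ∀ n, 0 ≤ a n) (hc : c < 1) (h : ∀ n, s (n + 1) ≤ c * s n + (a n - a (n + 1))) :
    Summable s := by
  have key : ∀ N, (1 - c) * ∑ i ∈ Finset.range N, s i + s N + a N ≤ s 0 + a 0 := by
    intro N
    induction N with
    | zero => simp
    | succ N ih => rw [Finset.sum_range_succ]; linarith [h N]
  refine summable_of_sum_range_le hs (c := (s 0 + a 0) / (1 - c)) fun N => ?_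
  rw [le_div_iff₀ (by linarith)]
  nlinarith [key N, hs N, ha N]

theorem tendsto_atTop_of_forall_tendsto_add_mul {α : Type*} {f : ℕ → α} {l : Filter α} {k : ℕ}
    (hk : 0 < k) (h : ∀ r < k, Tendsto (fun n => f (r + n * k)) atTop l) :
    Tendsto f atTop l := by
  intro s hs
  have hev : ∀ᶠ n in atTop, ∀ r ∈ Finset.range k, f (r + n * k) ∈ s :=
    (eventually_all_finset _).2 fun r hr => h r (Finset.mem_range.1 hr) hs
  obtain ⟨N, hN⟩ := eventually_atTop.1 hev
  refine mem_atTop_sets.2 ⟨N * k, fun n hn => ?_⟩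
  have hn' := hN (n / k) ((Nat.le_div_iff_mul_le hk).2 hn) (n % k)
    (Finset.mem_range.2 (Nat.mod_lt n hk))
  rwa [Nat.mod_add_div'] at hn'

theorem LinearMap.exists_lt_one_norm_le_of_norm_lt {E : Type*} [NormedAddCommGroup E]
    [NormedSpace ℝ E] [FiniteDimensional ℝ E] (T : E →ₗ[ℝ] E) (V : Submodule ℝ E)
    (hT : ∀ y ∈ V, y ≠ 0 → ‖T y‖ < ‖y‖) :
    ∃ μ, 0 ≤ μ ∧ μ < 1 ∧ ∀ y ∈ V, ‖T y‖ ≤ μ * ‖y‖ := by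
  set S := (V : Set E) ∩ Metric.sphere 0 1
  obtain ⟨μ, hμ0, hμ1, hμ⟩ : ∃ μ, 0 ≤ μ ∧ μ < 1 ∧ ∀ y ∈ S, ‖T y‖ ≤ μ := by
    rcases S.eq_empty_or_nonempty with hS | hS
    · exact ⟨0, le_rfl, one_pos, by simp [hS]⟩
    have hSc : IsCompact S := (isCompact_sphere 0 1).inter_left V.closed_of_finiteDimensional
    obtain ⟨y, ⟨hyV, hy1⟩, hmax⟩ :=
      hSc.exists_isMaxOn hS T.continuous_of_finiteDimensional.norm.continuousOn
    rw [mem_sphere_zero_iff_norm] at hy1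
    refine ⟨‖T y‖, norm_nonneg _, ?_, hmax⟩
    simpa [hy1] using hT y hyV (norm_ne_zero_iff.1 (by simp [hy1]))
  refine ⟨μ, hμ0, hμ1, fun y hy => ?_⟩
  rcases eq_or_ne y 0 with rfl | hy0
  · simp
  have hy' := hμ (‖y‖⁻¹ • y) ⟨V.smul_mem _ hy, by simp [norm_smul, hy0]⟩
  rw [map_smul, norm_smul, norm_inv, norm_norm, inv_mul_le_iff₀ (norm_pos_iff.2 hy0)] at hy'
  rwa [mul_comm] at hy'

theorem LinearMap.IsSymmetric.exists_tendsto_of_norm_le_of_inner_le {E : Type*}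
    [NormedAddCommGroup E] [InnerProductSpace ℝ E] {T : E →ₗ[ℝ] E} (hT : T.IsSymmetric)
    {u : E} (hu : ‖u‖ = 1) (hTu : T u = u) {μ : ℝ} (hμ0 : 0 ≤ μ) (hμ1 : μ < 1)
    (hgap : ∀ y, ⟪u, y⟫ = 0 → ‖T y‖ ≤ μ * ‖y‖) {w : ℕ → E}
    (hnorm : ∀ n, ‖w (n + 1)‖ ≤ ‖T (w n)‖) (hinner : ∀ n, ⟪u, w (n + 1)⟫ ≤ ⟪u, T (w n)⟫) :
    ∃ x, Tendsto w atTop (𝓝 x) := by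
  set α : ℕ → ℝ := fun n => ⟪u, w n⟫
  set r : ℕ → E := fun n => w n - α n • u
  have hw : ∀ n, w n = α n • u + r n := fun n => by simp [r]
  have hr : ∀ n, ⟪u, r n⟫ = 0 := fun n => by
    simp [r, α, inner_sub_right, inner_smul_right, hu]
  have hTr : ∀ n, ⟪u, T (r n)⟫ = 0 := fun n => by rw [← hT, hTu, hr]
  have pythagoras : ∀ (a : ℝ) (y : E), ⟪u, y⟫ = 0 → ‖a • u + y‖ ^ 2 = a ^ 2 + ‖y‖ ^ 2 :=
    fun a y hy => by
      rw [norm_add_sq_real, inner_smul_left, hy, norm_smul, hu]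
      simp
  have hstep : ∀ n, α (n + 1) ^ 2 + ‖r (n + 1)‖ ^ 2 ≤ α n ^ 2 + μ ^ 2 * ‖r n‖ ^ 2 := fun n =>
    calc α (n + 1) ^ 2 + ‖r (n + 1)‖ ^ 2 = ‖w (n + 1)‖ ^ 2 := by
          rw [hw (n + 1), pythagoras _ _ (hr _)]
      _ ≤ ‖T (w n)‖ ^ 2 := by gcongr; exact hnorm n
      _ = α n ^ 2 + ‖T (r n)‖ ^ 2 := by
          rw [hw n, map_add, map_smul, hTu, pythagoras _ _ (hTr n)]
      _ ≤ α n ^ 2 + μ ^ 2 * ‖r n‖ ^ 2 := by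
          rw [← mul_pow]
          gcongr
          exact hgap _ (hr n)
  have hμ21 : μ ^ 2 < 1 := by nlinarith
  have hE : Antitone fun n => α n ^ 2 + ‖r n‖ ^ 2 := antitone_nat_of_succ_le fun n => by
    linarith [hstep n, mul_le_of_le_one_left (sq_nonneg ‖r n‖) hμ21.le]
  have hanti : Antitone α := antitone_nat_of_succ_le fun n =>
    calc α (n + 1) ≤ ⟪u, T (w n)⟫ := hinner n
      _ = α n := by rw [← hT, hTu]
  have hbdd : BddBelow (Set.range α) := by
    -- `-α ≤ 1 + α²` and `α² ≤ ‖w n‖² ≤ ‖w 0‖²`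
    refine ⟨-(1 + (α 0 ^ 2 + ‖r 0‖ ^ 2)), ?_⟩
    rintro _ ⟨n, rfl⟩
    nlinarith [hE (Nat.zero_le n), sq_nonneg ‖r n‖, sq_nonneg (α n + 1)]
  have hr0 : Tendsto r atTop (𝓝 0) := by
    have hsum : Summable fun n => ‖r n‖ ^ 2 :=
      summable_of_succ_le_mul_add_sub (fun n => sq_nonneg _) (fun n => sq_nonneg (α n)) hμ21
        fun n => by linarith [hstep n]
    rw [tendsto_zero_iff_norm_tendsto_zero]
    simpa [Real.sqrt_sq (norm_nonneg _)] using hsum.tendsto_atTop_zero.sqrt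
  refine ⟨(⨅ n, α n) • u, ?_⟩
  simpa [← hw] using ((tendsto_atTop_ciInf hanti hbdd).smul_const u).add hr0

section NonnegVectors

variable {ι : Type*} [Fintype ι]

theorem norm_toLp_abs (x : ι → ℝ) : ‖toLp 2 |x|‖ = ‖toLp 2 x‖ := by
  simp [EuclideanSpace.norm_eq]

theorem norm_toLp_lt_of_le_of_ne {x y : ι → ℝ} (hx : 0 ≤ x) (hxy : x ≤ y) (hne : x ≠ y) :
    ‖toLp 2 x‖ < ‖toLp 2 y‖ := by
  obtain ⟨i, hi⟩ : ∃ i, x i < y i := by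
    by_contra! h
    exact hne (le_antisymm hxy h)
  rw [← sq_lt_sq₀ (norm_nonneg _) (norm_nonneg _), EuclideanSpace.real_norm_sq_eq,
    EuclideanSpace.real_norm_sq_eq]
  exact Finset.sum_lt_sum (fun j _ => pow_le_pow_left₀ (hx j) (hxy j) 2)
    ⟨i, Finset.mem_univ i, pow_lt_pow_left₀ hi (hx i) two_ne_zero⟩

theorem norm_toLp_le_of_le {x y : ι → ℝ} (hx : 0 ≤ x) (hxy : x ≤ y) :
    ‖toLp 2 x‖ ≤ ‖toLp 2 y‖ := by
  rcases eq_or_ne x y with rfl | hne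
  · exact le_rfl
  · exact (norm_toLp_lt_of_le_of_ne hx hxy hne).le

theorem eq_zero_of_nonneg_of_dotProduct_eq_zero {u y : ι → ℝ} (hu : ∀ i, 0 < u i) (hy : 0 ≤ y)
    (h : u ⬝ᵥ y = 0) : y = 0 := by
  have hterm := (Finset.sum_eq_zero_iff_of_nonneg fun i _ => mul_nonneg (hu i).le (hy i)).1 h
  funext i
  exact (mul_eq_zero.1 (hterm i (Finset.mem_univ i))).resolve_left (hu i).ne'

theorem exists_pos_and_exists_neg_of_dotProduct_eq_zero {u y : ι → ℝ} (hu : ∀ i, 0 < u i)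
    (h : u ⬝ᵥ y = 0) (hy : y ≠ 0) : (∃ p, 0 < y p) ∧ ∃ q, y q < 0 := by
  constructor
  · by_contra! hneg
    refine hy (neg_eq_zero.1 (eq_zero_of_nonneg_of_dotProduct_eq_zero hu ?_ ?_))
    · exact fun i => neg_nonneg.2 (hneg i)
    · rw [dotProduct_neg, h, neg_zero]
  · by_contra! hpos
    exact hy (eq_zero_of_nonneg_of_dotProduct_eq_zero hu hpos h)

end NonnegVectors

namespace Matrix

variable {ι : Type*} [Fintype ι]

theorem spectralRadius_toEuclideanCLM {𝕜 : Type*} [RCLike 𝕜] [DecidableEq ι] (A : Matrix ι ι 𝕜) :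
    spectralRadius 𝕜 (toEuclideanCLM (n := ι) (𝕜 := 𝕜) A) = spectralRadius 𝕜 A := by
  simp only [spectralRadius, AlgEquiv.spectrum_eq]

theorem IsHermitian.norm_toLp_mulVec_le {𝕜 : Type*} [RCLike 𝕜] [DecidableEq ι]
    {A : Matrix ι ι 𝕜} (hA : A.IsHermitian) (x : ι → 𝕜) :
    ‖toLp 2 (A *ᵥ x)‖ ≤ (spectralRadius 𝕜 A).toReal * ‖toLp 2 x‖ := by
  rw [← spectralRadius_toEuclideanCLM,
    ContinuousLinearMap.spectralRadius_eq_nnnorm _ (hA.isSelfAdjoint.map _)]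
  exact (toEuclideanCLM (n := ι) (𝕜 := 𝕜) A).le_opNorm (toLp 2 x)

theorem exists_mulVec_eq_smul_of_mem_spectrum_s10 {K : Type*} [Field K] [DecidableEq ι]
    {A : Matrix ι ι K} {μ : K} (h : μ ∈ spectrum K A) :
    ∃ x ≠ 0, A *ᵥ x = μ • x := by
  rw [← spectrum_toLin', ← Module.End.hasEigenvalue_iff_mem_spectrum] at h
  obtain ⟨x, hx⟩ := h.exists_hasEigenvector
  exact ⟨x, hx.2, by simpa using hx.apply_eq_smul⟩

theorem exists_mem_spectrum_abs_eq_one [DecidableEq ι] {A : Matrix ι ι ℝ}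
    (h : spectralRadius ℝ A = 1) : ∃ μ ∈ spectrum ℝ A, |μ| = 1 := by
  rw [← spectralRadius_toEuclideanCLM] at h
  have hne : (spectrum ℝ (toEuclideanCLM (n := ι) (𝕜 := ℝ) A)).Nonempty := by
    by_contra h'
    simp [spectralRadius, Set.not_nonempty_iff_eq_empty.1 h'] at h
  obtain ⟨μ, hμ, hμr⟩ := spectrum.exists_nnnorm_eq_spectralRadius_of_nonempty hne
  rw [h, ENNReal.coe_eq_one] at hμr
  refine ⟨μ, by rwa [AlgEquiv.spectrum_eq] at hμ, ?_⟩
  simpa using congrArg NNReal.toReal hμr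

variable {A : Matrix ι ι ℝ}

theorem abs_mulVec_le (hA : ∀ i j, 0 ≤ A i j) (x : ι → ℝ) : |A *ᵥ x| ≤ A *ᵥ |x| := fun i => by
  simp only [Pi.abs_apply, mulVec, dotProduct]
  refine (Finset.abs_sum_le_sum_abs _ _).trans_eq (Finset.sum_congr rfl fun j _ => ?_)
  rw [abs_mul, abs_of_nonneg (hA i j)]

theorem abs_mulVec_apply_lt (hA : ∀ i j, 0 < A i j) {x : ι → ℝ} {p q : ι} (hp : 0 < x p)
    (hq : x q < 0) (i : ι) : |(A *ᵥ x) i| < (A *ᵥ |x|) i := by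
  simp only [mulVec, dotProduct, Pi.abs_apply]
  rw [abs_lt, ← Finset.sum_neg_distrib]
  constructor
  · refine Finset.sum_lt_sum (fun j _ => ?_) ⟨p, Finset.mem_univ p, ?_⟩
    · rw [neg_le, ← mul_neg]
      exact mul_le_mul_of_nonneg_left (neg_le_abs _) (hA i j).le
    · nlinarith [hA i p, abs_nonneg (x p)]
  · refine Finset.sum_lt_sum (fun j _ => mul_le_mul_of_nonneg_left (le_abs_self _) (hA i j).le)
      ⟨q, Finset.mem_univ q, mul_lt_mul_of_pos_left (hq.trans_le (abs_nonneg _)) (hA i q)⟩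

theorem mulVec_apply_pos (hA : ∀ i j, 0 < A i j) {x : ι → ℝ} (hx : 0 ≤ x) (hx0 : x ≠ 0)
    (i : ι) : 0 < (A *ᵥ x) i := by
  obtain ⟨j, hj⟩ := Function.ne_iff.1 hx0
  exact Finset.sum_pos' (fun l _ => mul_nonneg (hA i l).le (hx l))
    ⟨j, Finset.mem_univ j, mul_pos (hA i j) ((hx j).lt_of_ne' hj)⟩

theorem mulVec_eq_self_of_le_mulVec (hcontr : ∀ x, ‖toLp 2 (A *ᵥ x)‖ ≤ ‖toLp 2 x‖)
    {z : ι → ℝ} (hz : 0 ≤ z) (hzA : z ≤ A *ᵥ z) : A *ᵥ z = z := by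
  by_contra hne
  exact (hcontr z).not_gt (norm_toLp_lt_of_le_of_ne hz hzA (Ne.symm hne))

theorem exists_pos_mulVec_eq_self (hA : ∀ i j, 0 < A i j)
    (hcontr : ∀ x, ‖toLp 2 (A *ᵥ x)‖ ≤ ‖toLp 2 x‖) {x : ι → ℝ} {ν : ℝ} (hx : x ≠ 0) (hν : |ν| = 1)
    (hAx : A *ᵥ x = ν • x) : ∃ u, (∀ i, 0 < u i) ∧ ‖toLp 2 u‖ = 1 ∧ A *ᵥ u = u := by
  have hfix : A *ᵥ |x| = |x| := by
    refine mulVec_eq_self_of_le_mulVec hcontr (abs_nonneg x) ?_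
    calc |x| = |A *ᵥ x| := by ext i; simp [hAx, abs_mul, hν]
      _ ≤ A *ᵥ |x| := abs_mulVec_le (fun i j => (hA i j).le) x
  have hpos : ∀ i, 0 < |x| i := fun i => by
    rw [← hfix]
    exact mulVec_apply_pos hA (abs_nonneg x) (by simpa using hx) i
  have hnorm : 0 < ‖toLp 2 |x|‖ := by
    rw [norm_toLp_abs]; exact norm_pos_iff.2 (by simpa using hx)
  refine ⟨‖toLp 2 |x|‖⁻¹ • |x|, fun i => mul_pos (inv_pos.2 hnorm) (hpos i), ?_, ?_⟩
  · rw [toLp_smul, norm_smul, norm_inv, norm_norm, inv_mul_cancel₀ hnorm.ne']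
  · rw [mulVec_smul, hfix]

theorem norm_mulVec_lt (hA : ∀ i j, 0 < A i j)
    (hcontr : ∀ x, ‖toLp 2 (A *ᵥ x)‖ ≤ ‖toLp 2 x‖) {u y : ι → ℝ} (hu : ∀ i, 0 < u i)
    (huy : u ⬝ᵥ y = 0) (hy : y ≠ 0) : ‖toLp 2 (A *ᵥ y)‖ < ‖toLp 2 y‖ := by
  obtain ⟨⟨p, hp⟩, q, hq⟩ := exists_pos_and_exists_neg_of_dotProduct_eq_zero hu huy hy
  calc ‖toLp 2 (A *ᵥ y)‖ = ‖toLp 2 |A *ᵥ y|‖ := (norm_toLp_abs _).symm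
    _ < ‖toLp 2 (A *ᵥ |y|)‖ :=
        norm_toLp_lt_of_le_of_ne (abs_nonneg _) (abs_mulVec_le (fun i j => (hA i j).le) y)
          fun h => (abs_mulVec_apply_lt hA hp hq p).ne (congrFun h p)
    _ ≤ ‖toLp 2 |y|‖ := hcontr _
    _ = ‖toLp 2 y‖ := norm_toLp_abs y

theorem IsSymm.exists_tendsto_of_le_mulVec [DecidableEq ι] (hsymm : A.IsSymm)
    (hpos : ∀ i j, 0 < A i j) (hρ : spectralRadius ℝ A = 1) {w : ℕ → ι → ℝ}
    (hw0 : ∀ t, 0 ≤ w t) (hw : ∀ t, w (t + 1) ≤ A *ᵥ w t) :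
    ∃ x, 0 ≤ x ∧ Tendsto (fun t => toLp 2 (w t)) atTop (𝓝 (toLp 2 x)) := by
  have hA : A.IsHermitian := by rwa [IsHermitian, conjTranspose_eq_transpose_of_trivial]
  have hcontr : ∀ x, ‖toLp 2 (A *ᵥ x)‖ ≤ ‖toLp 2 x‖ := fun x => by
    simpa [hρ] using hA.norm_toLp_mulVec_le x
  obtain ⟨ν, hν, hν1⟩ := exists_mem_spectrum_abs_eq_one hρ
  obtain ⟨x, hx, hAx⟩ := exists_mulVec_eq_smul_of_mem_spectrum_s10 hν
  obtain ⟨u, hu, hu1, hAu⟩ := exists_pos_mulVec_eq_self hpos hcontr hx hν1 hAx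
  have hinner : ∀ y : ι → ℝ, ⟪toLp 2 u, toLp 2 y⟫ = u ⬝ᵥ y := fun y => by
    simp [EuclideanSpace.inner_toLp_toLp, dotProduct_comm]
  obtain ⟨μ, hμ0, hμ1, hgap⟩ := (toEuclideanLin A).exists_lt_one_norm_le_of_norm_lt
    (ℝ ∙ toLp 2 u)ᗮ fun y hy hy0 => by
      rw [Submodule.mem_orthogonal_singleton_iff_inner_right, ← toLp_ofLp 2 y, hinner] at hy
      exact norm_mulVec_lt hpos hcontr hu hy (by simpa using hy0)
  obtain ⟨z, hz⟩ := (isSymmetric_toEuclideanLin_iff.2 hA).exists_tendsto_of_norm_le_of_inner_le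
    hu1 (by simpa using congrArg (toLp 2) hAu) hμ0 hμ1
    (fun y hy => hgap y (Submodule.mem_orthogonal_singleton_iff_inner_right.2 hy))
    (w := fun t => toLp 2 (w t)) (fun t => norm_toLp_le_of_le (hw0 _) (hw t)) fun t => by
      simp only [toLpLin_toLp, hinner]
      exact dotProduct_le_dotProduct_of_nonneg_left (hw t) fun i => (hu i).le
  refine ⟨ofLp z, ?_, hz⟩
  exact (isClosed_le continuous_const (PiLp.continuous_ofLp 2 _)).mem_of_tendsto hz
    (Eventually.of_forall hw0)

end Matrix

theorem euclNorm_eq_norm_toLp {m : ℕ} (w : Fin m → ℝ) : euclNorm w = ‖toLp 2 w‖ := by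
  simp [euclNorm, EuclideanSpace.norm_eq]

theorem IsRationalSolution.le_mulVec {m k : ℕ} {A : Matrix (Fin m) (Fin m) ℝ}
    {q : Fin m → ℕ → Fin m → ℝ} {v : ℕ → Fin m → ℝ} (hv : IsRationalSolution k A q v)
    (hA : ∀ i j, 0 ≤ A i j) (hq : ∀ i j l, 0 ≤ q i j l) (n : ℕ) : v (n + k) ≤ A *ᵥ v n := by
  intro i
  rw [hv.2 (n + k) (Nat.le_add_left k n) i, Nat.add_sub_cancel]
  refine div_le_self (dotProduct_nonneg_of_nonneg (hA i) (hv.1 n)) ?_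
  exact le_add_of_nonneg_right (Finset.sum_nonneg fun j _ =>
    dotProduct_nonneg_of_nonneg (hq i j) (hv.1 _))

theorem stmt_10_general {m k : ℕ} (hk : 2 ≤ k)
    (A : Matrix (Fin m) (Fin m) ℝ) (hsymm : A.IsSymm) (hposA : ∀ i j, 0 < A i j)
    (q : Fin m → ℕ → Fin m → ℝ) (hq : ∀ i j l, 0 ≤ q i j l)
    (hρ : spectralRadius ℝ A = 1)
    (v : ℕ → Fin m → ℝ) (hv : IsRationalSolution k A q v) :
    ∃ p : ℕ → Fin m → ℝ, (∀ n i, 0 ≤ p n i) ∧ (∀ n, p (n + k) = p n) ∧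
      Tendsto (fun n => euclNorm (v n - p n)) atTop (nhds 0) := by
  have hres : ∀ r, ∃ x, 0 ≤ x ∧
      Tendsto (fun n => toLp 2 (v (r + n * k))) atTop (𝓝 (toLp 2 x)) := fun r =>
    hsymm.exists_tendsto_of_le_mulVec hposA hρ (fun n => hv.1 _) fun n => by
      simpa [add_mul, add_assoc] using hv.le_mulVec (fun i j => (hposA i j).le) hq (r + n * k)
  choose x hx0 hx using hres
  refine ⟨fun n => x (n % k), fun n => hx0 _, fun n => by simp, ?_⟩
  have hlim : Tendsto (fun n => toLp 2 (v n) - toLp 2 (x (n % k))) atTop (𝓝 0) :=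
    tendsto_atTop_of_forall_tendsto_add_mul (show 0 < k by omega) fun r hr => by
      simpa [Nat.mod_eq_of_lt hr] using (hx r).sub_const (toLp 2 (x r))
  simpa [euclNorm_eq_norm_toLp] using tendsto_zero_iff_norm_tendsto_zero.1 hlim

/-- Rational vector system with real symmetric `A` having strictly
positive entries and nonnegative damping vectors. If the spectral radius of `A` equals
`1`, then every solution `(v_n)` converges to a (not necessarily prime) period-`k`
sequence `p` of nonnegative vectors: `‖v_n − p_n‖ → 0`. -/
theorem stmt_10 {m k : ℕ} (hm : 1 ≤ m) (hk : 2 ≤ k)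
    (A : Matrix (Fin m) (Fin m) ℝ) (hsymm : A.IsSymm) (hposA : ∀ i j, 0 < A i j)
    (q : Fin m → ℕ → Fin m → ℝ) (hq : ∀ i j l, 0 ≤ q i j l)
    (hρ : spectralRadius ℝ A = 1)
    (v : ℕ → Fin m → ℝ) (hv : IsRationalSolution k A q v) :
    ∃ p : ℕ → Fin m → ℝ, (∀ n i, 0 ≤ p n i) ∧ (∀ n, p (n + k) = p n) ∧
      Tendsto (fun n => euclNorm (v n - p n)) atTop (nhds 0) :=
  stmt_10_general hk A hsymm hposA q hq hρ v hv
end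

section
/- Consider the rational vector system with a real symmetric m×m matrix A all of whose entries are strictly positive and damping vectors q_{ij} ∈ [0,∞)^m. If the spectral radius of A is equal to 1, then there exists a solution (v_n) that is periodic of prime period k: v_{n+k} = v_n for all n, and there is no positive integer d < k with v_{n+d} = v_n for all n. -/
open Matrix

theorem spectralRadius_eq_nnnorm_of_forall_norm_le {𝕜 R : Type*} [NormedField 𝕜] [Ring R]
    [Algebra 𝕜 R] {a : R} {μ : 𝕜} (hμ : μ ∈ spectrum 𝕜 a) (hle : ∀ ν ∈ spectrum 𝕜 a, ‖ν‖ ≤ ‖μ‖) :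
    spectralRadius 𝕜 a = ‖μ‖₊ :=
  le_antisymm (iSup₂_le fun ν hν => by exact_mod_cast hle ν hν)
    (le_iSup₂ (f := fun ν (_ : ν ∈ spectrum 𝕜 a) => (‖ν‖₊ : ENNReal)) μ hμ)

namespace Matrix

variable {n : Type*} [Fintype n] {A : Matrix n n ℝ}

theorem dotProduct_self_pos {v : n → ℝ} (hv : v ≠ 0) : 0 < v ⬝ᵥ v :=
  (Finset.sum_nonneg fun i _ => mul_self_nonneg (v i)).lt_of_ne' (dotProduct_self_eq_zero.not.2 hv)

theorem abs_dotProduct_abs_self (v : n → ℝ) : |v| ⬝ᵥ |v| = v ⬝ᵥ v := by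
  simp only [dotProduct, Pi.abs_apply, abs_mul_abs_self]

theorem abs_mulVec_le_mulVec_abs (hA : ∀ i j, 0 ≤ A i j) (u : n → ℝ) :
    |A *ᵥ u| ≤ A *ᵥ |u| := fun i => by
  simp only [Pi.abs_apply, mulVec, dotProduct]
  refine (Finset.abs_sum_le_sum_abs _ _).trans_eq (Finset.sum_congr rfl fun j _ => ?_)
  rw [abs_mul, abs_of_nonneg (hA i j)]

theorem abs_dotProduct_abs_mulVec_le (hA : ∀ i j, 0 ≤ A i j) (u : n → ℝ) :
    |u| ⬝ᵥ |A *ᵥ u| ≤ |u| ⬝ᵥ A *ᵥ |u| :=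
  dotProduct_le_dotProduct_of_nonneg_left (abs_mulVec_le_mulVec_abs hA u) (abs_nonneg u)

theorem dotProduct_mulVec_self_le_abs (hA : ∀ i j, 0 ≤ A i j) (u : n → ℝ) :
    u ⬝ᵥ A *ᵥ u ≤ |u| ⬝ᵥ A *ᵥ |u| := by
  refine le_trans ?_ (abs_dotProduct_abs_mulVec_le hA u)
  simp only [dotProduct, Pi.abs_apply, ← abs_mul]
  exact Finset.sum_le_sum fun i _ => le_abs_self _

theorem abs_mul_dotProduct_self_le_of_mulVec_eq_smul (hA : ∀ i j, 0 ≤ A i j) {ν : ℝ}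
    {y : n → ℝ} (hy : A *ᵥ y = ν • y) : |ν| * (y ⬝ᵥ y) ≤ |y| ⬝ᵥ A *ᵥ |y| := by
  refine le_of_eq_of_le ?_ (abs_dotProduct_abs_mulVec_le hA y)
  simp only [hy, dotProduct, Finset.mul_sum, Pi.abs_apply, Pi.smul_apply, smul_eq_mul, abs_mul]
  exact Finset.sum_congr rfl fun i _ => by rw [← abs_mul_abs_self (y i)]; ring

theorem isCompact_setOf_dotProduct_self_eq_one :
    IsCompact {x : n → ℝ | x ⬝ᵥ x = 1} := by
  refine Metric.isCompact_of_isClosed_isBounded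
    (isClosed_eq (by fun_prop) continuous_const) ?_
  refine (Metric.isBounded_closedBall (x := 0) (r := 1)).subset fun x hx => ?_
  rw [mem_closedBall_zero_iff, pi_norm_le_iff_of_nonneg zero_le_one]
  intro i
  rw [Real.norm_eq_abs, abs_le_one_iff_mul_self_le_one, ← hx.out]
  exact Finset.single_le_sum (f := fun j => x j * x j) (fun j _ => mul_self_nonneg _)
    (Finset.mem_univ i)

theorem exists_dotProduct_mulVec_max [Nonempty n] (A : Matrix n n ℝ) :
    ∃ μ x, x ≠ 0 ∧ x ⬝ᵥ A *ᵥ x = μ * (x ⬝ᵥ x) ∧ ∀ y, y ⬝ᵥ A *ᵥ y ≤ μ * (y ⬝ᵥ y) := by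
  classical
  obtain ⟨x, hx, hmax⟩ := isCompact_setOf_dotProduct_self_eq_one.exists_isMaxOn
    ⟨Pi.single (Classical.arbitrary n) 1, by simp⟩ (f := fun x : n → ℝ => x ⬝ᵥ A *ᵥ x)
    (by fun_prop)
  refine ⟨x ⬝ᵥ A *ᵥ x, x, ?_, by rw [hx.out, mul_one], fun y => ?_⟩
  · rintro rfl
    simp at hx
  rcases eq_or_ne y 0 with rfl | hy
  · simp
  have hyy : 0 < y ⬝ᵥ y := dotProduct_self_pos hy
  set t := (Real.sqrt (y ⬝ᵥ y))⁻¹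
  have ht : t ^ 2 * (y ⬝ᵥ y) = 1 := by
    rw [inv_pow, Real.sq_sqrt hyy.le, inv_mul_cancel₀ hyy.ne']
  have hty : t ^ 2 * (y ⬝ᵥ A *ᵥ y) ≤ x ⬝ᵥ A *ᵥ x := by
    have : (t • y) ⬝ᵥ A *ᵥ (t • y) ≤ x ⬝ᵥ A *ᵥ x :=
      hmax (show (t • y) ⬝ᵥ (t • y) = 1 by
        rwa [dotProduct_smul, smul_dotProduct, smul_eq_mul, smul_eq_mul, ← mul_assoc, ← sq])
    rwa [mulVec_smul, dotProduct_smul, smul_dotProduct, smul_eq_mul, smul_eq_mul, ← mul_assoc,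
      ← sq] at this
  calc y ⬝ᵥ A *ᵥ y = (y ⬝ᵥ y) * (t ^ 2 * (y ⬝ᵥ A *ᵥ y)) := by
        rw [← mul_assoc, mul_comm (y ⬝ᵥ y), ht, one_mul]
    _ ≤ (y ⬝ᵥ y) * (x ⬝ᵥ A *ᵥ x) := mul_le_mul_of_nonneg_left hty hyy.le
    _ = (x ⬝ᵥ A *ᵥ x) * (y ⬝ᵥ y) := mul_comm _ _

theorem IsSymm.mulVec_eq_smul_of_dotProduct_mulVec_max (hA : A.IsSymm) {μ : ℝ} {x : n → ℝ}
    (hx : x ⬝ᵥ A *ᵥ x = μ * (x ⬝ᵥ x)) (hmax : ∀ y, y ⬝ᵥ A *ᵥ y ≤ μ * (y ⬝ᵥ y)) :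
    A *ᵥ x = μ • x := by
  classical
  have hB : (μ • 1 - A).PosSemidef := by
    refine .of_dotProduct_mulVec_nonneg ?_ fun y => ?_
    · rw [isHermitian_iff_isSymm]
      exact (isSymm_one.smul μ).sub hA
    · simpa [sub_mulVec, smul_mulVec, dotProduct_sub] using hmax y
  have := (hB.dotProduct_mulVec_zero_iff x).1 (by
    simp [sub_mulVec, smul_mulVec, dotProduct_sub, hx])
  rwa [sub_mulVec, sub_eq_zero, smul_mulVec, one_mulVec, eq_comm] at this

theorem IsSymm.exists_nonneg_eigenvector_of_nonneg [DecidableEq n] [Nonempty n]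
    (hsymm : A.IsSymm) (hA : ∀ i j, 0 ≤ A i j) :
    ∃ μ w, 0 ≤ w ∧ w ≠ 0 ∧ A *ᵥ w = μ • w ∧ ∀ ν ∈ spectrum ℝ A, |ν| ≤ μ := by
  obtain ⟨μ, x, hx0, hx, hmax⟩ := exists_dotProduct_mulVec_max A
  have habs : |x| ⬝ᵥ A *ᵥ |x| = μ * (|x| ⬝ᵥ |x|) :=
    le_antisymm (hmax _) (abs_dotProduct_abs_self x ▸ hx ▸ dotProduct_mulVec_self_le_abs hA x)
  refine ⟨μ, |x|, abs_nonneg x, by simpa using hx0,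
    hsymm.mulVec_eq_smul_of_dotProduct_mulVec_max habs hmax, fun ν hν => ?_⟩
  rw [← spectrum_toLin', ← Module.End.hasEigenvalue_iff_mem_spectrum] at hν
  obtain ⟨y, hy⟩ := hν.exists_hasEigenvector
  have hAy : A *ᵥ y = ν • y := by simpa using hy.apply_eq_smul
  refine le_of_mul_le_mul_right ?_ (dotProduct_self_pos hy.2)
  calc |ν| * (y ⬝ᵥ y) ≤ |y| ⬝ᵥ A *ᵥ |y| := abs_mul_dotProduct_self_le_of_mulVec_eq_smul hA hAy
    _ ≤ μ * (y ⬝ᵥ y) := abs_dotProduct_abs_self y ▸ hmax |y|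

theorem IsSymm.exists_nonneg_mulVec_eq_self [DecidableEq n] [Nonempty n] (hsymm : A.IsSymm)
    (hA : ∀ i j, 0 ≤ A i j) (hρ : spectralRadius ℝ A = 1) : ∃ w, 0 ≤ w ∧ w ≠ 0 ∧ A *ᵥ w = w := by
  obtain ⟨μ, w, hw0, hw, hAw, hle⟩ := hsymm.exists_nonneg_eigenvector_of_nonneg hA
  have hμ : μ ∈ spectrum ℝ A := by
    rw [← spectrum_toLin', ← Module.End.hasEigenvalue_iff_mem_spectrum]
    exact Module.End.hasEigenvalue_of_hasEigenvector ⟨by simpa using hAw, hw⟩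
  have hμ0 : 0 ≤ μ := (abs_nonneg μ).trans (hle μ hμ)
  have hρμ := spectralRadius_eq_nnnorm_of_forall_norm_le hμ fun ν hν => by
    simpa [Real.norm_eq_abs, abs_of_nonneg hμ0] using hle ν hν
  have : μ = 1 := by
    rw [hρ] at hρμ
    simpa [Real.norm_eq_abs, abs_of_nonneg hμ0] using congrArg ENNReal.toReal hρμ.symm
  exact ⟨w, hw0, hw, by rw [hAw, this, one_smul]⟩

end Matrix

def pulseTrain {E : Type*} [Zero E] (k : ℕ) (w : E) (n : ℕ) : E :=
  if k ∣ n then w else 0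

section pulseTrain

variable {E : Type*} [Zero E] {k : ℕ} {w : E}

theorem pulseTrain_periodic : Function.Periodic (pulseTrain k w) k := fun n => by
  simp only [pulseTrain, Nat.dvd_add_self_right]

theorem not_pulseTrain_periodic (hw : w ≠ 0) {d : ℕ} (hd : 0 < d) (hdk : d < k) :
    ¬ Function.Periodic (pulseTrain k w) d := fun h => by
  have := h 0
  simp only [pulseTrain, zero_add, Nat.not_dvd_of_pos_of_lt hd hdk, dvd_zero, if_true,
    if_false] at this
  exact hw this.symm

end pulseTrain

theorem isRationalSolution_pulseTrain {m k : ℕ} {A : Matrix (Fin m) (Fin m) ℝ}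
    (q : Fin m → ℕ → Fin m → ℝ) {w : Fin m → ℝ} (hw : 0 ≤ w) (hAw : A *ᵥ w = w) :
    IsRationalSolution k A q (pulseTrain k w) := by
  refine ⟨fun n i => ?_, fun n hn i => ?_⟩
  · unfold pulseTrain
    split_ifs
    exacts [hw i, le_rfl]
  have hper : pulseTrain k w (n - k) = pulseTrain k w n := by
    simpa only [Nat.sub_add_cancel hn] using (pulseTrain_periodic (k := k) (w := w) (n - k)).symm
  rw [hper]
  by_cases hkn : k ∣ n
  · have hgap : ∀ j ∈ Finset.Ico 1 k, ¬ k ∣ n - j := fun j hj hkj => by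
      rw [Finset.mem_Ico] at hj
      refine Nat.not_dvd_of_pos_of_lt hj.1 hj.2 ?_
      simpa only [Nat.sub_sub_self (hj.2.le.trans hn)] using Nat.dvd_sub hkn hkj
    rw [Finset.sum_eq_zero fun j hj => by rw [pulseTrain, if_neg (hgap j hj), dotProduct_zero]]
    simp only [pulseTrain, if_pos hkn, hAw, add_zero, div_one]
  · simp only [pulseTrain, if_neg hkn, mulVec_zero, Pi.zero_apply, zero_div]

theorem stmt_11_general {m k : ℕ} (hm : 1 ≤ m)
    (A : Matrix (Fin m) (Fin m) ℝ) (hsymm : A.IsSymm) (hposA : ∀ i j, 0 < A i j)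
    (q : Fin m → ℕ → Fin m → ℝ)
    (hρ : spectralRadius ℝ A = 1) :
    ∃ v : ℕ → Fin m → ℝ, IsRationalSolution k A q v ∧
      (∀ n, v (n + k) = v n) ∧
      ¬ ∃ d : ℕ, 0 < d ∧ d < k ∧ ∀ n, v (n + d) = v n := by
  have : Nonempty (Fin m) := ⟨⟨0, hm⟩⟩
  obtain ⟨w, hw0, hw, hAw⟩ := hsymm.exists_nonneg_mulVec_eq_self (fun i j => (hposA i j).le) hρ
  exact ⟨pulseTrain k w, isRationalSolution_pulseTrain q hw0 hAw, pulseTrain_periodic,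
    fun ⟨d, hd, hdk, h⟩ => not_pulseTrain_periodic hw hd hdk h⟩

/-- Rational vector system with real symmetric `A` having strictly
positive entries and nonnegative damping vectors. If the spectral radius of `A` equals
`1`, then there exists a solution which is periodic of prime period `k`. -/
theorem stmt_11 {m k : ℕ} (hm : 1 ≤ m) (hk : 2 ≤ k)
    (A : Matrix (Fin m) (Fin m) ℝ) (hsymm : A.IsSymm) (hposA : ∀ i j, 0 < A i j)
    (q : Fin m → ℕ → Fin m → ℝ) (hq : ∀ i j l, 0 ≤ q i j l)
    (hρ : spectralRadius ℝ A = 1) :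
    ∃ v : ℕ → Fin m → ℝ, IsRationalSolution k A q v ∧
      (∀ n, v (n + k) = v n) ∧
      ¬ ∃ d : ℕ, 0 < d ∧ d < k ∧ ∀ n, v (n + d) = v n :=
  stmt_11_general hm A hsymm hposA q hρ
end

section
/- Consider the rational vector system with a real symmetric m×m matrix A all of whose entries are strictly positive and damping vectors q_{ij} ∈ [0,∞)^m. If the spectral radius of A is strictly greater than 1, then there exists a choice of nonnegative initial conditions such that the corresponding solution (v_n) has the property that for every i ∈ {1,…,m} the coordinate sequence (v_{n,i})_{n=1}^∞ is unbounded. -/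
open Matrix

private lemma pow_entry_nonneg {m : ℕ} (A : Matrix (Fin m) (Fin m) ℝ)
    (hA : ∀ i j, 0 < A i j) : ∀ t i j, 0 ≤ (A ^ t) i j := by
  intro t
  induction t with
  | zero =>
    intro i j
    simp only [pow_zero, Matrix.one_apply]
    split <;> norm_num
  | succ t ih =>
    intro i j
    rw [pow_succ, Matrix.mul_apply]
    exact Finset.sum_nonneg fun l _ => mul_nonneg (ih i l) (hA l j).le

private lemma pow_mulVec_eigen {m : ℕ} (A : Matrix (Fin m) (Fin m) ℝ) (μ : ℝ)
    (w : Fin m → ℝ) (hw : A *ᵥ w = μ • w) : ∀ t, (A ^ t) *ᵥ w = μ ^ t • w := by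
  intro t
  induction t with
  | zero => simp [Matrix.one_mulVec]
  | succ t ih =>
    rw [pow_succ', ← Matrix.mulVec_mulVec, ih, Matrix.mulVec_smul, hw, smul_smul,
      pow_succ, mul_comm]

/-- Rational vector system with real symmetric `A` having strictly
positive entries and nonnegative damping vectors. If the spectral radius of `A` is
strictly greater than `1`, then there is a choice of nonnegative initial conditions whose
solution `(v_n)` has every coordinate sequence `(v_{n,i})_n` unbounded. -/
theorem stmt_12 {m k : ℕ} (hm : 1 ≤ m) (hk : 2 ≤ k)
    (A : Matrix (Fin m) (Fin m) ℝ) (hsymm : A.IsSymm) (hposA : ∀ i j, 0 < A i j)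
    (q : Fin m → ℕ → Fin m → ℝ) (hq : ∀ i j l, 0 ≤ q i j l)
    (hρ : 1 < spectralRadius ℝ A) :
    ∃ v : ℕ → Fin m → ℝ, IsRationalSolution k A q v ∧
      ∀ i, ¬ BddAbove (Set.range fun n => v n i) := by
  have hk0 : 0 < k := by omega
  -- extract a real eigenvalue of modulus > 1
  obtain ⟨μ, hμmem, hμ⟩ : ∃ μ ∈ spectrum ℝ A, 1 < |μ| := by
    rw [spectralRadius] at hρ
    obtain ⟨μ, hμ⟩ := lt_iSup_iff.mp hρ
    obtain ⟨hmem, h⟩ := lt_iSup_iff.mp hμ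
    refine ⟨μ, hmem, ?_⟩
    have h2 : (1 : NNReal) < ‖μ‖₊ := by exact_mod_cast h
    have := NNReal.coe_lt_coe.mpr h2
    simpa [Real.norm_eq_abs] using this
  obtain ⟨w, hw0, hw⟩ : ∃ w : Fin m → ℝ, w ≠ 0 ∧ A *ᵥ w = μ • w := by
    rw [spectrum.mem_iff, Matrix.isUnit_iff_isUnit_det, isUnit_iff_ne_zero, not_not] at hμmem
    obtain ⟨w, hw0, hw⟩ := Matrix.exists_mulVec_eq_zero_iff.mpr hμmem
    refine ⟨w, hw0, ?_⟩
    rw [Matrix.sub_mulVec] at hw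
    have h2 : (algebraMap ℝ (Matrix (Fin m) (Fin m) ℝ) μ) *ᵥ w = μ • w := by
      ext i
      simp [Matrix.mulVec, dotProduct, Matrix.algebraMap_matrix_apply,
        Finset.sum_ite_eq]
    rw [h2, sub_eq_zero] at hw
    exact hw.symm
  -- the explicit solution
  set v : ℕ → Fin m → ℝ := fun n =>
    if k ∣ n then (A ^ (n / k)) *ᵥ (fun _ => (1 : ℝ)) else 0 with hv
  have hEntry := pow_entry_nonneg A hposA
  have hvnonneg : ∀ n i, 0 ≤ v n i := by
    intro n i
    by_cases hd : k ∣ n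
    · simp only [hv, if_pos hd, Matrix.mulVec, dotProduct]
      exact Finset.sum_nonneg fun j _ => by
        simpa using hEntry (n / k) i j
    · simp [hv, if_neg hd]
  refine ⟨v, ⟨hvnonneg, ?_⟩, ?_⟩
  · -- the recurrence
    intro n hn i
    by_cases hd : k ∣ n
    · -- denominators vanish
      have hsum : ∑ j ∈ Finset.Ico 1 k, (q i j) ⬝ᵥ v (n - j) = 0 := by
        refine Finset.sum_eq_zero fun j hj => ?_
        obtain ⟨hj1, hjk⟩ := Finset.mem_Ico.mp hj
        have hnd : ¬ k ∣ (n - j) := by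
          intro hdvd
          have hjn : j ≤ n := le_trans hjk.le hn
          have : k ∣ j := by
            have := Nat.dvd_sub hd hdvd
            rwa [Nat.sub_sub_self hjn] at this
          exact absurd (Nat.le_of_dvd (by omega) this) (by omega)
        simp [hv, if_neg hnd, dotProduct]
      rw [hsum, add_zero, div_one]
      obtain ⟨s, rfl⟩ := hd
      have hs : 1 ≤ s := Nat.one_le_iff_ne_zero.mpr (by rintro rfl; simp at hn; omega)
      obtain ⟨s', rfl⟩ := Nat.exists_eq_add_of_le hs
      have hsub : k * (1 + s') - k = k * s' := by
        rw [Nat.mul_add, Nat.mul_one, Nat.add_sub_cancel_left]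
      have hdvd' : k ∣ k * (1 + s') - k := by rw [hsub]; exact Dvd.intro s' rfl
      simp only [hv, if_pos (Dvd.intro (1 + s') rfl), if_pos hdvd', hsub,
        if_pos (dvd_mul_right k s'), Nat.mul_div_cancel_left _ hk0]
      rw [Nat.add_comm 1 s', pow_succ', ← Matrix.mulVec_mulVec]
    · -- trivial branch: everything is 0
      have hnd : ¬ k ∣ (n - k) := by
        intro hdvd
        apply hd
        have := Nat.dvd_add hdvd (dvd_refl k)
        rwa [Nat.sub_add_cancel hn] at this
      simp [hv, if_neg hd, if_neg hnd, Matrix.mulVec_zero]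
  · -- unboundedness of every coordinate
    intro i hB
    obtain ⟨M, hM⟩ := hB
    have hMn : ∀ n, v n i ≤ M := fun n => hM (Set.mem_range_self n)
    -- boundedness of coordinate i bounds all entries of A ^ t
    obtain ⟨j0, hj0⟩ : ∃ j0, w j0 ≠ 0 := Function.ne_iff.mp hw0
    have hAij0 : 0 < A i j0 := hposA i j0
    have hentry_le : ∀ t j, (A ^ t) j0 j ≤ M / A i j0 := by
      intro t j
      have h1 : A i j0 * (A ^ t) j0 j ≤ ∑ l, A i l * (A ^ t) l j := by
        refine Finset.single_le_sum (f := fun l => A i l * (A ^ t) l j)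
          (fun l _ => mul_nonneg (hposA i l).le (hEntry t l j)) (Finset.mem_univ j0)
      have h2 : ∑ l, A i l * (A ^ t) l j = (A ^ (t + 1)) i j := by
        rw [pow_succ', Matrix.mul_apply]
      have h3 : (A ^ (t + 1)) i j ≤ ∑ j', (A ^ (t + 1)) i j' :=
        Finset.single_le_sum (fun j' _ => hEntry (t + 1) i j') (Finset.mem_univ j)
      have h4 : ∑ j', (A ^ (t + 1)) i j' = v ((t + 1) * k) i := by
        have hdvd : k ∣ (t + 1) * k := dvd_mul_left k (t + 1)
        simp [hv, if_pos hdvd, Nat.mul_div_cancel _ hk0, Matrix.mulVec, dotProduct]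
      have h5 : A i j0 * (A ^ t) j0 j ≤ M := by
        calc A i j0 * (A ^ t) j0 j ≤ (A ^ (t + 1)) i j := h1.trans_eq h2
          _ ≤ v ((t + 1) * k) i := h3.trans_eq h4
          _ ≤ M := hMn _
      rw [le_div_iff₀ hAij0, mul_comm]
      exact h5
    -- eigenvalue growth contradicts the bound
    have hwj0 : 0 < |w j0| := abs_pos.mpr hj0
    set C : ℝ := (∑ j, (M / A i j0) * |w j|) / |w j0| with hC
    have hbound : ∀ t, |μ| ^ t ≤ C := by
      intro t
      have heig := pow_mulVec_eigen A μ w hw t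
      have h1 : |μ| ^ t * |w j0| = |((A ^ t) *ᵥ w) j0| := by
        rw [heig]
        simp [Pi.smul_apply, abs_mul, abs_pow, smul_eq_mul]
      have h2 : |((A ^ t) *ᵥ w) j0| ≤ ∑ j, (A ^ t) j0 j * |w j| := by
        rw [Matrix.mulVec, dotProduct]
        refine (Finset.abs_sum_le_sum_abs _ _).trans ?_
        refine Finset.sum_le_sum fun j _ => ?_
        rw [abs_mul, abs_of_nonneg (hEntry t j0 j)]
      have h3 : ∑ j, (A ^ t) j0 j * |w j| ≤ ∑ j, (M / A i j0) * |w j| :=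
        Finset.sum_le_sum fun j _ =>
          mul_le_mul_of_nonneg_right (hentry_le t j) (abs_nonneg _)
      rw [hC, le_div_iff₀ hwj0]
      calc |μ| ^ t * |w j0| = |((A ^ t) *ᵥ w) j0| := h1
        _ ≤ ∑ j, (A ^ t) j0 j * |w j| := h2
        _ ≤ ∑ j, (M / A i j0) * |w j| := h3
    obtain ⟨t, ht⟩ := pow_unbounded_of_one_lt C hμ
    exact absurd (hbound t) (not_le.mpr ht)
end

section
/- Consider the planar rational system with δ_k = γ_k and associated symmetric matrix A = [[β_k, γ_k],[γ_k, ε_k]]. If the spectral radius of A is strictly less than 1, then every solution satisfies lim_{n→∞} x_n = 0 and lim_{n→∞} y_n = 0 (the unique equilibrium). -/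
open Filter

/-- `(x, y)` is a solution of the planar rational system (case `δ_k = γ_k`):
nonnegative sequences satisfying, for all `n ≥ k`,
`x_n = (β x_{n−k} + γ y_{n−k}) / (1 + Σ B_j x_{n−j} + Σ C_j y_{n−j})` and
`y_n = (γ x_{n−k} + ε y_{n−k}) / (1 + Σ D_j x_{n−j} + Σ E_j y_{n−j})`. -/
def IsPlanarSolution (k : ℕ) (β γ ε : ℝ) (B C D E : ℕ → ℝ) (x y : ℕ → ℝ) : Prop :=
  (∀ n, 0 ≤ x n) ∧ (∀ n, 0 ≤ y n) ∧
  (∀ n, k ≤ n → x n = (β * x (n - k) + γ * y (n - k)) /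
      (1 + (∑ j ∈ Finset.Ico 1 k, B j * x (n - j)) +
        ∑ j ∈ Finset.Ico 1 k, C j * y (n - j))) ∧
  (∀ n, k ≤ n → y n = (γ * x (n - k) + ε * y (n - k)) /
      (1 + (∑ j ∈ Finset.Ico 1 k, D j * x (n - j)) +
        ∑ j ∈ Finset.Ico 1 k, E j * y (n - j)))

/-- Planar rational system with `δ_k = γ_k` and associated symmetric
matrix `A = [[β, γ], [γ, ε]]`. If the spectral radius of `A` is strictly less than `1`,
then every solution satisfies `x_n → 0` and `y_n → 0`. -/
theorem stmt_13 {k : ℕ} (hk : 2 ≤ k) (β γ ε : ℝ)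
    (hβ : 0 ≤ β) (hγ : 0 ≤ γ) (hε : 0 ≤ ε)
    (B C D E : ℕ → ℝ) (hB : ∀ j, 0 ≤ B j) (hC : ∀ j, 0 ≤ C j)
    (hD : ∀ j, 0 ≤ D j) (hE : ∀ j, 0 ≤ E j)
    (hρ : spectralRadius ℝ !![β, γ; γ, ε] < 1)
    (x y : ℕ → ℝ) (hxy : IsPlanarSolution k β γ ε B C D E x y) :
    Tendsto x atTop (nhds 0) ∧ Tendsto y atTop (nhds 0) := by
  obtain ⟨hx0, hy0, hxe, hye⟩ := hxy
  have hkpos : 0 < k := by omega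
  -- The top eigenvalue
  set s := Real.sqrt ((β-ε)^2 + 4*γ^2) with hs
  have hs2 : s^2 = (β-ε)^2 + 4*γ^2 := Real.sq_sqrt (by positivity)
  have hs0 : 0 ≤ s := Real.sqrt_nonneg _
  set lam := (β + ε + s)/2 with hlam
  clear_value s lam
  -- s dominates |β - ε|
  have hsd1 : β - ε ≤ s := by
    nlinarith [sq_nonneg (s - (β - ε)), sq_nonneg (s + (β - ε))]
  have hsd2 : ε - β ≤ s := by
    nlinarith [sq_nonneg (s - (ε - β)), sq_nonneg (s + (ε - β))]
  have hβlam : β ≤ lam := by rw [hlam]; linarith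
  have hεlam : ε ≤ lam := by rw [hlam]; linarith
  have hlam0 : 0 ≤ lam := le_trans hβ hβlam
  -- lam is an eigenvalue, hence lam < 1
  have hdet : (algebraMap ℝ (Matrix (Fin 2) (Fin 2) ℝ) lam - !![β,γ;γ,ε]).det = 0 := by
    rw [Algebra.algebraMap_eq_smul_one]
    rw [Matrix.det_fin_two]
    simp [Matrix.smul_apply, Matrix.sub_apply, Matrix.one_apply]
    rw [hlam]; nlinarith [hs2]
  have hmem : lam ∈ spectrum ℝ !![β,γ;γ,ε] := by
    rw [spectrum.mem_iff, Matrix.isUnit_iff_isUnit_det, hdet]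
    simp
  have hle : (‖lam‖₊ : ENNReal) ≤ spectralRadius ℝ !![β,γ;γ,ε] :=
    le_iSup₂ (f := fun k (_ : k ∈ spectrum ℝ !![β,γ;γ,ε]) => (‖k‖₊ : ENNReal)) lam hmem
  have h1 : ‖lam‖₊ < 1 := by exact_mod_cast lt_of_le_of_lt hle hρ
  have h2 : |lam| < 1 := by
    rw [← Real.norm_eq_abs, ← coe_nnnorm]
    exact_mod_cast h1
  have hlam1 : lam < 1 := lt_of_le_of_lt (le_abs_self _) h2
  -- pick μ strictly between lam and 1
  set μ := (lam + 1)/2 with hμ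
  clear_value μ
  have hμlam : lam < μ := by rw [hμ]; linarith
  have hμ1 : μ < 1 := by rw [hμ]; linarith
  have hμ0 : 0 < μ := by rw [hμ]; linarith
  -- the characteristic polynomial is nonnegative at μ
  have hp : 0 ≤ μ^2 - μ*(β+ε) + β*ε - γ^2 := by
    have h3 : s/2 ≤ μ - (β+ε)/2 := by rw [hlam] at hμlam; linarith
    nlinarith [sq_nonneg (μ - (β+ε)/2)]
  -- Lyapunov weights
  set a := γ + μ - ε with ha
  set b := γ + μ - β with hb
  clear_value a b
  have ha0 : 0 < a := by rw [ha]; linarith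
  have hb0 : 0 < b := by rw [hb]; linarith
  -- pointwise bounds from the recurrence
  have hxb : ∀ n, k ≤ n → x n ≤ β * x (n-k) + γ * y (n-k) := by
    intro n hn
    rw [hxe n hn]
    have hN : 0 ≤ β * x (n-k) + γ * y (n-k) :=
      add_nonneg (mul_nonneg hβ (hx0 _)) (mul_nonneg hγ (hy0 _))
    have hS1 : 0 ≤ ∑ j ∈ Finset.Ico 1 k, B j * x (n - j) :=
      Finset.sum_nonneg fun j _ => mul_nonneg (hB j) (hx0 _)
    have hS2 : 0 ≤ ∑ j ∈ Finset.Ico 1 k, C j * y (n - j) :=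
      Finset.sum_nonneg fun j _ => mul_nonneg (hC j) (hy0 _)
    exact div_le_self hN (by linarith)
  have hyb : ∀ n, k ≤ n → y n ≤ γ * x (n-k) + ε * y (n-k) := by
    intro n hn
    rw [hye n hn]
    have hN : 0 ≤ γ * x (n-k) + ε * y (n-k) :=
      add_nonneg (mul_nonneg hγ (hx0 _)) (mul_nonneg hε (hy0 _))
    have hS1 : 0 ≤ ∑ j ∈ Finset.Ico 1 k, D j * x (n - j) :=
      Finset.sum_nonneg fun j _ => mul_nonneg (hD j) (hx0 _)
    have hS2 : 0 ≤ ∑ j ∈ Finset.Ico 1 k, E j * y (n - j) :=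
      Finset.sum_nonneg fun j _ => mul_nonneg (hE j) (hy0 _)
    exact div_le_self hN (by linarith)
  clear hxe hye hρ hle h1 h2 hdet hmem
  -- the Lyapunov function
  set u : ℕ → ℝ := fun n => a * x n + b * y n with hu
  have hu0 : ∀ n, 0 ≤ u n := fun n =>
    add_nonneg (mul_nonneg ha0.le (hx0 n)) (mul_nonneg hb0.le (hy0 n))
  have hurec : ∀ n, k ≤ n → u n ≤ μ * u (n - k) := by
    intro n hn
    have h4 := hxb n hn
    have h5 := hyb n hn
    have h6 : a*β + b*γ ≤ μ*a := by rw [ha, hb]; linarith [hp]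
    have h7 : a*γ + b*ε ≤ μ*b := by rw [ha, hb]; linarith [hp]
    have hx' := hx0 (n-k)
    have hy' := hy0 (n-k)
    have t1 := mul_le_mul_of_nonneg_left h4 ha0.le
    have t2 := mul_le_mul_of_nonneg_left h5 hb0.le
    have t3 := mul_le_mul_of_nonneg_right h6 hx'
    have t4 := mul_le_mul_of_nonneg_right h7 hy'
    simp only [hu]
    linarith only [t1, t2, t3, t4]
  -- geometric decay
  set Cst : ℝ := ∑ r ∈ Finset.range k, u r with hCst
  have hCst0 : 0 ≤ Cst := Finset.sum_nonneg fun r _ => hu0 r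
  have hCub : ∀ r, r < k → u r ≤ Cst :=
    fun r hr => Finset.single_le_sum (fun i _ => hu0 i) (Finset.mem_range.mpr hr)
  have hgeo : ∀ n, u n ≤ Cst * μ ^ (n / k) := by
    intro n
    induction n using Nat.strong_induction_on with
    | _ n ih =>
      by_cases hn : n < k
      · rw [Nat.div_eq_of_lt hn]
        simpa using hCub n hn
      · push_neg at hn
        have hlt : n - k < n := by omega
        have h8 := hurec n hn
        have h9 := ih (n - k) hlt
        have h10 : n / k = (n - k) / k + 1 := by
          rw [Nat.div_eq_sub_div hkpos hn]
        rw [h10, pow_succ]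
        calc u n ≤ μ * u (n - k) := h8
          _ ≤ μ * (Cst * μ ^ ((n-k)/k)) := by
              exact mul_le_mul_of_nonneg_left h9 hμ0.le
          _ = Cst * (μ ^ ((n-k)/k) * μ) := by ring
  -- the geometric bound tends to 0
  have hdivtop : Tendsto (fun n : ℕ => n / k) atTop atTop := by
    apply tendsto_atTop_atTop.2
    intro b
    exact ⟨b * k, fun n hn => Nat.le_div_iff_mul_le hkpos |>.mpr hn⟩
  have hpowto : Tendsto (fun n : ℕ => μ ^ (n / k)) atTop (nhds 0) :=
    (tendsto_pow_atTop_nhds_zero_of_lt_one hμ0.le hμ1).comp hdivtop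
  have hbound : Tendsto (fun n : ℕ => Cst * μ ^ (n / k)) atTop (nhds 0) := by
    simpa using hpowto.const_mul Cst
  have huto : Tendsto u atTop (nhds 0) :=
    squeeze_zero hu0 hgeo hbound
  constructor
  · apply squeeze_zero hx0 (g := fun n => u n / a)
    · intro n
      rw [le_div_iff₀ ha0]
      have := mul_nonneg hb0.le (hy0 n)
      simp only [hu]; linarith
    · simpa using huto.div_const a
  · apply squeeze_zero hy0 (g := fun n => u n / b)
    · intro n
      rw [le_div_iff₀ hb0]
      have := mul_nonneg ha0.le (hx0 n)
      simp only [hu]; linarith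
    · simpa using huto.div_const b
end

section
/- Consider the planar rational system with δ_k = γ_k and associated symmetric matrix A = [[β_k, γ_k],[γ_k, ε_k]]. Suppose the spectral radius of A equals 1 and −1 is not an eigenvalue of A. Then every solution converges to a periodic solution of (not necessarily prime) period k: there exist sequences p, r : ℕ → [0,∞) with p_{n+k} = p_n and r_{n+k} = r_n for all n such that lim_{n→∞}(x_n − p_n) = 0 and lim_{n→∞}(y_n − r_n) = 0. Furthermore, there exists a solution that is periodic of prime period k (periodic with period k and with no smaller positive period). -/
open Filter

private theorem aux_decay {lam K S : ℝ} (hlam : |lam| < 1) (hK : 0 ≤ K) (t s : ℕ → ℝ)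
    (hs : ∀ m, s (m + 1) ≤ s m) (hS : Tendsto s atTop (nhds S)) (hsS : ∀ m, S ≤ s m)
    (hrec : ∀ m, |t (m + 1) - lam * t m| ≤ K * (s m - s (m + 1))) :
    Tendsto t atTop (nhds 0) := by
  have hlam0 : 0 ≤ |lam| := abs_nonneg _
  have hsmono : Antitone s := antitone_nat_of_succ_le hs
  have key : ∀ j i, |t (j + i)| ≤ |lam| ^ i * |t j| + K * (s j - s (j + i)) := by
    intro j i
    induction i with
    | zero => simp
    | succ i ih =>
      have h1 : |t (j + i + 1)| ≤ |lam| * |t (j + i)| + |t (j + i + 1) - lam * t (j + i)| := by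
        calc |t (j + i + 1)| = |lam * t (j + i) + (t (j + i + 1) - lam * t (j + i))| := by ring_nf
          _ ≤ |lam * t (j + i)| + |t (j + i + 1) - lam * t (j + i)| := abs_add_le _ _
          _ = |lam| * |t (j + i)| + |t (j + i + 1) - lam * t (j + i)| := by rw [abs_mul]
      have h2 := hrec (j + i)
      have h3 : 0 ≤ K * (s j - s (j + i)) :=
        mul_nonneg hK (by linarith [hsmono (Nat.le_add_right j i)])
      have h4 : |lam| * |t (j + i)| ≤ |lam| * (|lam| ^ i * |t j| + K * (s j - s (j + i))) :=
        mul_le_mul_of_nonneg_left ih hlam0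
      have h5 : |lam| * (|lam| ^ i * |t j| + K * (s j - s (j + i)))
          ≤ |lam| ^ (i + 1) * |t j| + K * (s j - s (j + i)) := by
        have h6 : |lam| * (K * (s j - s (j + i))) ≤ 1 * (K * (s j - s (j + i))) :=
          mul_le_mul_of_nonneg_right (le_of_lt hlam) h3
        have e2 : |lam| * (|lam| ^ i * |t j| + K * (s j - s (j + i)))
            = |lam| ^ (i + 1) * |t j| + |lam| * (K * (s j - s (j + i))) := by ring
        linarith
      have hJ : j + (i + 1) = (j + i) + 1 := by omega
      rw [hJ]
      calc |t (j + i + 1)| ≤ |lam| * |t (j + i)| + |t (j + i + 1) - lam * t (j + i)| := h1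
        _ ≤ (|lam| ^ (i + 1) * |t j| + K * (s j - s (j + i))) + K * (s (j+i) - s (j + i + 1)) := by
            linarith
        _ = |lam| ^ (i + 1) * |t j| + K * (s j - s (j + i + 1)) := by ring
  rw [Metric.tendsto_atTop]
  intro ε hε
  have hKp : 0 < K + 1 := by linarith
  have hδ : 0 < ε / (2 * (K + 1)) := by positivity
  obtain ⟨j, hj⟩ := (Metric.tendsto_atTop.1 hS) (ε / (2 * (K + 1))) hδ
  have hjs : s j - S < ε / (2 * (K + 1)) := by
    have h := hj j le_rfl
    rw [Real.dist_eq] at h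
    have h' := abs_lt.1 h
    linarith [h'.2]
  have htail : ∀ m, K * (s j - s m) ≤ K * (ε / (2 * (K + 1))) := by
    intro m
    rcases le_or_gt j m with h | h
    · exact mul_le_mul_of_nonneg_left (by linarith [hsS m]) hK
    · have hsm : s j ≤ s m := hsmono h.le
      have h0 : 0 ≤ ε / (2 * (K + 1)) := hδ.le
      nlinarith
  have htail2 : K * (ε / (2 * (K + 1))) < ε / 2 := by
    have e3 : K * (ε / (2 * (K + 1))) = ε * K / (2 * (K + 1)) := by ring
    rw [e3, div_lt_iff₀ (by positivity : (0:ℝ) < 2 * (K + 1))]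
    nlinarith
  have hpow : Tendsto (fun i => |lam| ^ i * |t j|) atTop (nhds 0) := by
    simpa using (tendsto_pow_atTop_nhds_zero_of_lt_one hlam0 hlam).mul_const |t j|
  obtain ⟨i0, hi0⟩ := (Metric.tendsto_atTop.1 hpow) (ε / 2 - K * (ε / (2 * (K + 1))))
    (by linarith)
  refine ⟨j + i0, fun m hm => ?_⟩
  have hjm : j ≤ m := le_trans (Nat.le_add_right _ _) hm
  have hm' : m = j + (m - j) := by omega
  have hik : i0 ≤ m - j := by omega
  have hb := key j (m - j)
  have hp := hi0 (m - j) hik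
  rw [Real.dist_eq, sub_zero] at hp ⊢
  have hpabs : |lam| ^ (m - j) * |t j| < ε / 2 - K * (ε / (2 * (K + 1))) := by
    have hnn : 0 ≤ |lam| ^ (m - j) * |t j| := by positivity
    rw [abs_of_nonneg hnn] at hp
    linarith
  rw [← hm'] at hb
  calc |t m| ≤ |lam| ^ (m - j) * |t j| + K * (s j - s m) := hb
    _ < (ε / 2 - K * (ε / (2 * (K + 1)))) + K * (ε / (2 * (K + 1))) := by
        have := htail m; linarith
    _ = ε / 2 := by ring
    _ < ε := by linarith

private theorem conv_main {β γ ε : ℝ} (hβ0 : 0 ≤ β) (hγ0 : 0 ≤ γ) (hε0 : 0 ≤ ε)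
    (hβ1 : β ≤ 1) (hε1 : ε ≤ 1)
    (hcase : γ = 0 ∨ (0 < γ ∧ γ * γ = (1 - β) * (1 - ε) ∧ |β + ε - 1| < 1))
    (X Y : ℕ → ℝ) (hX0 : ∀ m, 0 ≤ X m) (hY0 : ∀ m, 0 ≤ Y m)
    (hXr : ∀ m, X (m + 1) ≤ β * X m + γ * Y m) (hYr : ∀ m, Y (m + 1) ≤ γ * X m + ε * Y m) :
    ∃ Lx Ly : ℝ, 0 ≤ Lx ∧ 0 ≤ Ly ∧
      Tendsto X atTop (nhds Lx) ∧ Tendsto Y atTop (nhds Ly) := by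
  rcases hcase with hγz | ⟨hγp, hfac, hlam⟩
  · -- diagonal case: both sequences antitone
    subst hγz
    have hXa : Antitone X := antitone_nat_of_succ_le fun m => by nlinarith [hXr m, hX0 m]
    have hYa : Antitone Y := antitone_nat_of_succ_le fun m => by nlinarith [hYr m, hY0 m]
    have hXb : BddBelow (Set.range X) := ⟨0, by rintro z ⟨m, rfl⟩; exact hX0 m⟩
    have hYb : BddBelow (Set.range Y) := ⟨0, by rintro z ⟨m, rfl⟩; exact hY0 m⟩
    exact ⟨⨅ m, X m, ⨅ m, Y m, le_ciInf hX0, le_ciInf hY0,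
      tendsto_atTop_ciInf hXa hXb, tendsto_atTop_ciInf hYa hYb⟩
  · have hβ1' : β < 1 := by nlinarith
    have hε1' : ε < 1 := by nlinarith
    set s : ℕ → ℝ := fun m => γ * X m + (1 - β) * Y m with hs_def
    set t : ℕ → ℝ := fun m => (1 - β) * X m - γ * Y m with ht_def
    have hs : ∀ m, s (m + 1) ≤ s m := by
      intro m
      have h1 := mul_le_mul_of_nonneg_left (hXr m) hγ0
      have h2 := mul_le_mul_of_nonneg_left (hYr m) (by linarith : (0:ℝ) ≤ 1 - β)
      have h3 : γ * (β * X m + γ * Y m) + (1 - β) * (γ * X m + ε * Y m) = s m := by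
        simp only [hs_def]
        linear_combination (Y m) * hfac
      simp only [hs_def] at h1 h2 h3 ⊢
      linarith
    have hsb : BddBelow (Set.range s) := by
      refine ⟨0, ?_⟩
      rintro z ⟨m, rfl⟩
      have := hX0 m; have := hY0 m
      simp only [hs_def]
      nlinarith
    have hsa : Antitone s := antitone_nat_of_succ_le hs
    set S : ℝ := ⨅ m, s m with hS_def
    have hSconv : Tendsto s atTop (nhds S) := tendsto_atTop_ciInf hsa hsb
    have hsS : ∀ m, S ≤ s m := fun m => ciInf_le hsb m
    set K : ℝ := max ((1 - β) / γ) (γ / (1 - β)) with hK_def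
    have hK0 : 0 ≤ K := le_trans (div_nonneg (by linarith) hγ0) (le_max_left _ _)
    have hK1 : 1 - β ≤ K * γ := by
      calc 1 - β ≤ (1 - β) / γ * γ := by rw [div_mul_cancel₀]; exact hγp.ne'
        _ ≤ K * γ := mul_le_mul_of_nonneg_right (le_max_left _ _) hγ0
    have hK2 : γ ≤ K * (1 - β) := by
      calc γ = γ / (1 - β) * (1 - β) := by rw [div_mul_cancel₀]; linarith
        _ ≤ K * (1 - β) := mul_le_mul_of_nonneg_right (le_max_right _ _) (by linarith)
    have hrec : ∀ m, |t (m + 1) - (β + ε - 1) * t m| ≤ K * (s m - s (m + 1)) := by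
      intro m
      set e1 : ℝ := β * X m + γ * Y m - X (m + 1) with he1
      set e2 : ℝ := γ * X m + ε * Y m - Y (m + 1) with he2
      have he10 : 0 ≤ e1 := by simp only [he1]; linarith [hXr m]
      have he20 : 0 ≤ e2 := by simp only [he2]; linarith [hYr m]
      have hid : t (m + 1) - (β + ε - 1) * t m = -(1 - β) * e1 + γ * e2 := by
        simp only [ht_def, he1, he2]
        linear_combination (-(X m)) * hfac
      have hsd : s m - s (m + 1) = γ * e1 + (1 - β) * e2 := by
        simp only [hs_def, he1, he2]
        linear_combination (-(Y m)) * hfac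
      rw [hid, hsd]
      have hb1 : -(1 - β) * e1 + γ * e2 ≤ K * (γ * e1 + (1 - β) * e2) := by nlinarith
      have hb2 : -(K * (γ * e1 + (1 - β) * e2)) ≤ -(1 - β) * e1 + γ * e2 := by nlinarith
      exact abs_le.mpr ⟨hb2, hb1⟩
    have htt : Tendsto t atTop (nhds 0) := aux_decay hlam hK0 t s hs hSconv hsS hrec
    have hQ : (0:ℝ) < γ * γ + (1 - β) * (1 - β) := by nlinarith
    have hXeq : ∀ m, X m = (γ * s m + (1 - β) * t m) / (γ * γ + (1 - β) * (1 - β)) := by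
      intro m
      rw [eq_div_iff hQ.ne']
      simp only [hs_def, ht_def]; ring
    have hYeq : ∀ m, Y m = ((1 - β) * s m - γ * t m) / (γ * γ + (1 - β) * (1 - β)) := by
      intro m
      rw [eq_div_iff hQ.ne']
      simp only [hs_def, ht_def]; ring
    have hXc : Tendsto X atTop
        (nhds ((γ * S + (1 - β) * 0) / (γ * γ + (1 - β) * (1 - β)))) := by
      apply Tendsto.congr (fun m => (hXeq m).symm)
      exact ((hSconv.const_mul γ).add (htt.const_mul (1 - β))).div_const _
    have hYc : Tendsto Y atTop
        (nhds (((1 - β) * S - γ * 0) / (γ * γ + (1 - β) * (1 - β)))) := by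
      apply Tendsto.congr (fun m => (hYeq m).symm)
      exact ((hSconv.const_mul (1 - β)).sub (htt.const_mul γ)).div_const _
    refine ⟨_, _, ?_, ?_, hXc, hYc⟩
    · exact ge_of_tendsto' hXc hX0
    · exact ge_of_tendsto' hYc hY0


private theorem aux_eigvec {β γ ε : ℝ} (hγ : 0 ≤ γ) (hβ1 : β ≤ 1)
    (hq1 : (1 - β) * (1 - ε) = γ * γ) :
    ∃ a b : ℝ, 0 ≤ a ∧ 0 ≤ b ∧ ¬(a = 0 ∧ b = 0) ∧
      β * a + γ * b = a ∧ γ * a + ε * b = b := by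
  rcases eq_or_lt_of_le hγ with hγz | hγp
  · have h0 : (1 - β) * (1 - ε) = 0 := by rw [hq1, ← hγz]; ring
    rcases mul_eq_zero.1 h0 with h | h
    · refine ⟨1, 0, zero_le_one, le_rfl, by simp, ?_, ?_⟩
      · rw [← hγz]; linarith
      · rw [← hγz]; ring
    · refine ⟨0, 1, le_rfl, zero_le_one, by simp, ?_, ?_⟩
      · rw [← hγz]; ring
      · rw [← hγz]; linarith
  · refine ⟨γ, 1 - β, hγ, by linarith, ?_, by ring, by linarith [hq1]⟩
    intro ⟨h1, _⟩
    exact absurd h1.symm hγp.ne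

/-- Planar rational system with `δ_k = γ_k` and associated symmetric
matrix `A = [[β, γ], [γ, ε]]`. Suppose the spectral radius of `A` equals `1` and `−1` is
not an eigenvalue of `A`. Then every solution converges to a periodic solution of (not
necessarily prime) period `k`, and there exists a solution periodic of prime period `k`. -/
theorem stmt_14 {k : ℕ} (hk : 2 ≤ k) (β γ ε : ℝ)
    (hβ : 0 ≤ β) (hγ : 0 ≤ γ) (hε : 0 ≤ ε)
    (B C D E : ℕ → ℝ) (hB : ∀ j, 0 ≤ B j) (hC : ∀ j, 0 ≤ C j)
    (hD : ∀ j, 0 ≤ D j) (hE : ∀ j, 0 ≤ E j)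
    (hρ : spectralRadius ℝ !![β, γ; γ, ε] = 1)
    (heig : (-1 : ℝ) ∉ spectrum ℝ !![β, γ; γ, ε]) :
    (∀ x y : ℕ → ℝ, IsPlanarSolution k β γ ε B C D E x y →
      ∃ p r : ℕ → ℝ, (∀ n, 0 ≤ p n) ∧ (∀ n, 0 ≤ r n) ∧
        (∀ n, p (n + k) = p n) ∧ (∀ n, r (n + k) = r n) ∧
        Tendsto (fun n => x n - p n) atTop (nhds 0) ∧
        Tendsto (fun n => y n - r n) atTop (nhds 0)) ∧
    (∃ x y : ℕ → ℝ, IsPlanarSolution k β γ ε B C D E x y ∧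
      (∀ n, x (n + k) = x n ∧ y (n + k) = y n) ∧
      ¬ ∃ d : ℕ, 0 < d ∧ d < k ∧ ∀ n, x (n + d) = x n ∧ y (n + d) = y n) := by
  have hkpos : 0 < k := by omega
  -- Spectrum characterization
  have hmem : ∀ μ : ℝ, μ ∈ spectrum ℝ !![β, γ; γ, ε] ↔ (μ - β) * (μ - ε) - γ * γ = 0 := by
    intro μ
    rw [spectrum.mem_iff, Matrix.isUnit_iff_isUnit_det, isUnit_iff_ne_zero, not_not]
    have h : (algebraMap ℝ (Matrix (Fin 2) (Fin 2) ℝ) μ - !![β, γ; γ, ε]).det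
        = (μ - β) * (μ - ε) - γ * γ := by
      simp [Matrix.det_fin_two, Matrix.algebraMap_matrix_apply]
    rw [h]
  set d : ℝ := Real.sqrt ((β - ε) ^ 2 + 4 * γ ^ 2) with hd_def
  have hd0 : 0 ≤ d := Real.sqrt_nonneg _
  have hd2 : d ^ 2 = (β - ε) ^ 2 + 4 * γ ^ 2 := Real.sq_sqrt (by positivity)
  have hdge1 : β - ε ≤ d := by nlinarith
  have hdge2 : ε - β ≤ d := by nlinarith
  set rp : ℝ := (β + ε + d) / 2 with hrp_def
  set rm : ℝ := (β + ε - d) / 2 with hrm_def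
  have hfac : ∀ μ : ℝ, (μ - β) * (μ - ε) - γ * γ = (μ - rm) * (μ - rp) := by
    intro μ
    simp only [hrp_def, hrm_def]
    linear_combination hd2 / 4
  have hσ : spectrum ℝ !![β, γ; γ, ε] = {rm, rp} := by
    ext μ
    rw [hmem μ, hfac μ, mul_eq_zero, sub_eq_zero, sub_eq_zero]
    simp [Set.mem_insert_iff]
  have hrp0 : 0 ≤ rp := by simp only [hrp_def]; linarith
  have habs : |rm| ≤ rp := by
    rw [abs_le]
    constructor <;> simp only [hrm_def, hrp_def] <;> linarith
  -- extract rp = 1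
  have hrp1 : rp = 1 := by
    rw [spectralRadius, hσ] at hρ
    have h2 : (⨆ μ ∈ ({rm, rp} : Set ℝ), (‖μ‖₊ : ENNReal)) = (‖rp‖₊ : ENNReal) := by
      rw [iSup_insert, iSup_singleton]
      refine sup_eq_right.mpr ?_
      have hle : ‖rm‖₊ ≤ ‖rp‖₊ := by
        rw [← NNReal.coe_le_coe, coe_nnnorm, coe_nnnorm, Real.norm_eq_abs,
          Real.norm_eq_abs, abs_of_nonneg hrp0]
        exact habs
      exact_mod_cast hle
    rw [h2] at hρ
    have h3 : ‖rp‖₊ = 1 := by exact_mod_cast hρ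
    have h4 : |rp| = 1 := by
      simpa [← Real.norm_eq_abs] using congrArg NNReal.toReal h3
    rw [abs_of_nonneg hrp0] at h4
    exact h4
  have hsum : β + ε = 1 + rm := by
    have : rm + rp = β + ε := by simp only [hrm_def, hrp_def]; ring
    linarith [hrp1 ▸ this]
  have hq1 : (1 - β) * (1 - ε) = γ * γ := by
    have h := hfac 1
    rw [hrp1] at h
    linarith [h]
  have hβ1 : β ≤ 1 := by
    have : β ≤ rp := by simp only [hrp_def]; linarith
    linarith [hrp1 ▸ this]
  have hε1 : ε ≤ 1 := by
    have : ε ≤ rp := by simp only [hrp_def]; linarith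
    linarith [hrp1 ▸ this]
  have hrmne : rm ≠ -1 := by
    rw [hσ] at heig
    simp only [Set.mem_insert_iff, Set.mem_singleton_iff, not_or] at heig
    exact fun h => heig.1 h.symm
  have hrmgt : -1 < rm := by
    rcases lt_or_eq_of_le (by linarith [(abs_le.1 habs).1, hrp1] : (-1:ℝ) ≤ rm) with h | h
    · exact h
    · exact absurd h.symm hrmne
  have hcase : γ = 0 ∨ (0 < γ ∧ γ * γ = (1 - β) * (1 - ε) ∧ |β + ε - 1| < 1) := by
    rcases eq_or_lt_of_le hγ with h | h
    · exact Or.inl h.symm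
    · right
      refine ⟨h, hq1.symm, ?_⟩
      have hβ1' : β < 1 := by nlinarith
      have hε1' : ε < 1 := by nlinarith
      rw [abs_lt]
      exact ⟨by linarith, by linarith⟩
  constructor
  · -- Part 1: convergence to a periodic sequence
    rintro x y ⟨hx0, hy0, hxr, hyr⟩
    have hstep : ∀ n, k ≤ n →
        x n ≤ β * x (n - k) + γ * y (n - k) ∧ y n ≤ γ * x (n - k) + ε * y (n - k) := by
      intro n hn
      have hnum1 : 0 ≤ β * x (n - k) + γ * y (n - k) :=
        add_nonneg (mul_nonneg hβ (hx0 _)) (mul_nonneg hγ (hy0 _))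
      have hnum2 : 0 ≤ γ * x (n - k) + ε * y (n - k) :=
        add_nonneg (mul_nonneg hγ (hx0 _)) (mul_nonneg hε (hy0 _))
      have hden1 : (1:ℝ) ≤ 1 + (∑ j ∈ Finset.Ico 1 k, B j * x (n - j)) +
          ∑ j ∈ Finset.Ico 1 k, C j * y (n - j) := by
        have s1 : 0 ≤ ∑ j ∈ Finset.Ico 1 k, B j * x (n - j) :=
          Finset.sum_nonneg fun j _ => mul_nonneg (hB j) (hx0 _)
        have s2 : 0 ≤ ∑ j ∈ Finset.Ico 1 k, C j * y (n - j) :=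
          Finset.sum_nonneg fun j _ => mul_nonneg (hC j) (hy0 _)
        linarith
      have hden2 : (1:ℝ) ≤ 1 + (∑ j ∈ Finset.Ico 1 k, D j * x (n - j)) +
          ∑ j ∈ Finset.Ico 1 k, E j * y (n - j) := by
        have s1 : 0 ≤ ∑ j ∈ Finset.Ico 1 k, D j * x (n - j) :=
          Finset.sum_nonneg fun j _ => mul_nonneg (hD j) (hx0 _)
        have s2 : 0 ≤ ∑ j ∈ Finset.Ico 1 k, E j * y (n - j) :=
          Finset.sum_nonneg fun j _ => mul_nonneg (hE j) (hy0 _)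
        linarith
      constructor
      · rw [hxr n hn]; exact div_le_self hnum1 hden1
      · rw [hyr n hn]; exact div_le_self hnum2 hden2
    have hconv : ∀ i : ℕ, ∃ L R : ℝ, 0 ≤ L ∧ 0 ≤ R ∧
        Tendsto (fun m => x (i + m * k)) atTop (nhds L) ∧
        Tendsto (fun m => y (i + m * k)) atTop (nhds R) := by
      intro i
      have hXr : ∀ m, x (i + (m + 1) * k) ≤ β * x (i + m * k) + γ * y (i + m * k) := by
        intro m
        have hn : k ≤ i + (m + 1) * k := by
          have : k ≤ (m + 1) * k := Nat.le_mul_of_pos_left k (by omega)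
          omega
        have hsub : i + (m + 1) * k - k = i + m * k := by
          have : (m + 1) * k = m * k + k := Nat.succ_mul m k
          omega
        have := (hstep _ hn).1
        rwa [hsub] at this
      have hYr : ∀ m, y (i + (m + 1) * k) ≤ γ * x (i + m * k) + ε * y (i + m * k) := by
        intro m
        have hn : k ≤ i + (m + 1) * k := by
          have : k ≤ (m + 1) * k := Nat.le_mul_of_pos_left k (by omega)
          omega
        have hsub : i + (m + 1) * k - k = i + m * k := by
          have : (m + 1) * k = m * k + k := Nat.succ_mul m k
          omega
        have := (hstep _ hn).2
        rwa [hsub] at this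
      exact conv_main hβ hγ hε hβ1 hε1 hcase _ _ (fun m => hx0 _) (fun m => hy0 _) hXr hYr
    choose L R hL0 hR0 hLt hRt using hconv
    refine ⟨fun n => L (n % k), fun n => R (n % k), fun n => hL0 _, fun n => hR0 _,
      fun n => by simp [Nat.add_mod_right], fun n => by simp [Nat.add_mod_right], ?_, ?_⟩
    · rw [Metric.tendsto_atTop]
      intro ε' hε'
      choose f hf using fun i => Metric.tendsto_atTop.1 (hLt i) ε' hε'
      set M : ℕ := (Finset.range k).sup f with hM
      refine ⟨k * (M + 1), fun n hn => ?_⟩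
      have hdm : k * (n / k) + n % k = n := Nat.div_add_mod n k
      have hik : n % k < k := Nat.mod_lt _ hkpos
      have hfM : f (n % k) ≤ M := Finset.le_sup (Finset.mem_range.mpr hik)
      have hmul : k * M < k * (n / k) := by
        have h1 : k * (M + 1) = k * M + k := Nat.mul_succ k M
        omega
      have hmge : f (n % k) ≤ n / k := by
        have := Nat.lt_of_mul_lt_mul_left hmul
        omega
      have heq : n % k + (n / k) * k = n := by
        have : (n / k) * k = k * (n / k) := Nat.mul_comm _ _
        omega
      have := hf (n % k) (n / k) hmge
      rw [Real.dist_eq] at this ⊢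
      rw [heq] at this
      simpa [sub_zero] using this
    · rw [Metric.tendsto_atTop]
      intro ε' hε'
      choose f hf using fun i => Metric.tendsto_atTop.1 (hRt i) ε' hε'
      set M : ℕ := (Finset.range k).sup f with hM
      refine ⟨k * (M + 1), fun n hn => ?_⟩
      have hdm : k * (n / k) + n % k = n := Nat.div_add_mod n k
      have hik : n % k < k := Nat.mod_lt _ hkpos
      have hfM : f (n % k) ≤ M := Finset.le_sup (Finset.mem_range.mpr hik)
      have hmul : k * M < k * (n / k) := by
        have h1 : k * (M + 1) = k * M + k := Nat.mul_succ k M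
        omega
      have hmge : f (n % k) ≤ n / k := by
        have := Nat.lt_of_mul_lt_mul_left hmul
        omega
      have heq : n % k + (n / k) * k = n := by
        have : (n / k) * k = k * (n / k) := Nat.mul_comm _ _
        omega
      have := hf (n % k) (n / k) hmge
      rw [Real.dist_eq] at this ⊢
      rw [heq] at this
      simpa [sub_zero] using this
  · -- Part 2: a prime period k solution
    obtain ⟨a, b, ha0, hb0, hab, heq1, heq2⟩ := aux_eigvec hγ hβ1 hq1
    refine ⟨fun n => if k ∣ n then a else 0, fun n => if k ∣ n then b else 0, ?_, ?_, ?_⟩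
    · refine ⟨fun n => by dsimp only; split <;> [exact ha0; exact le_rfl],
        fun n => by dsimp only; split <;> [exact hb0; exact le_rfl], ?_, ?_⟩
      · intro n hn
        have hsub : ∀ j, 1 ≤ j → j < k → ¬ k ∣ (n - j) ∨ ¬ k ∣ n := by
          intro j hj1 hjk
          by_cases hdn : k ∣ n
          · left
            intro hdvd
            have hjn : j ≤ n := by omega
            have : k ∣ n - (n - j) := Nat.dvd_sub hdn hdvd
            have hnj : n - (n - j) = j := by omega
            rw [hnj] at this
            have := Nat.le_of_dvd (by omega) this
            omega
          · right; exact hdn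
        by_cases hdn : k ∣ n
        · have hdnk : k ∣ n - k := Nat.dvd_sub hdn dvd_rfl
          have hz : ∀ j ∈ Finset.Ico 1 k, B j * (if k ∣ (n - j) then a else 0) = 0 := by
            intro j hj
            rw [Finset.mem_Ico] at hj
            rcases hsub j hj.1 hj.2 with h | h
            · simp [h]
            · exact absurd hdn h
          have hz2 : ∀ j ∈ Finset.Ico 1 k, C j * (if k ∣ (n - j) then b else 0) = 0 := by
            intro j hj
            rw [Finset.mem_Ico] at hj
            rcases hsub j hj.1 hj.2 with h | h
            · simp [h]
            · exact absurd hdn h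
          simp only [if_pos hdn, if_pos hdnk, Finset.sum_congr rfl hz,
            Finset.sum_congr rfl hz2, Finset.sum_const_zero]
          rw [heq1]
          norm_num
        · have hdnk : ¬ k ∣ n - k := by
            intro hdvd
            have : k ∣ (n - k) + k := dvd_add hdvd dvd_rfl
            rw [Nat.sub_add_cancel hn] at this
            exact hdn this
          simp [hdn, hdnk]
      · intro n hn
        have hsub : ∀ j, 1 ≤ j → j < k → ¬ k ∣ (n - j) ∨ ¬ k ∣ n := by
          intro j hj1 hjk
          by_cases hdn : k ∣ n
          · left
            intro hdvd
            have hjn : j ≤ n := by omega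
            have : k ∣ n - (n - j) := Nat.dvd_sub hdn hdvd
            have hnj : n - (n - j) = j := by omega
            rw [hnj] at this
            have := Nat.le_of_dvd (by omega) this
            omega
          · right; exact hdn
        by_cases hdn : k ∣ n
        · have hdnk : k ∣ n - k := Nat.dvd_sub hdn dvd_rfl
          have hz : ∀ j ∈ Finset.Ico 1 k, D j * (if k ∣ (n - j) then a else 0) = 0 := by
            intro j hj
            rw [Finset.mem_Ico] at hj
            rcases hsub j hj.1 hj.2 with h | h
            · simp [h]
            · exact absurd hdn h
          have hz2 : ∀ j ∈ Finset.Ico 1 k, E j * (if k ∣ (n - j) then b else 0) = 0 := by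
            intro j hj
            rw [Finset.mem_Ico] at hj
            rcases hsub j hj.1 hj.2 with h | h
            · simp [h]
            · exact absurd hdn h
          simp only [if_pos hdn, if_pos hdnk, Finset.sum_congr rfl hz,
            Finset.sum_congr rfl hz2, Finset.sum_const_zero]
          rw [heq2]
          norm_num
        · have hdnk : ¬ k ∣ n - k := by
            intro hdvd
            have : k ∣ (n - k) + k := dvd_add hdvd dvd_rfl
            rw [Nat.sub_add_cancel hn] at this
            exact hdn this
          simp [hdn, hdnk]
    · intro n
      constructor <;> (dsimp only; simp only [Nat.dvd_add_self_right])
    · rintro ⟨e, he0, hek, hper⟩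
      have h1 := (hper 0).1
      have h2 := (hper 0).2
      have hkd : ¬ k ∣ e := fun h => by have := Nat.le_of_dvd he0 h; omega
      have hk0 : k ∣ 0 := dvd_zero k
      simp only [Nat.zero_add, if_pos hk0, if_neg hkd] at h1 h2
      exact hab ⟨h1.symm, h2.symm⟩
end

section
/- Consider the planar rational system with δ_k = γ_k and associated symmetric matrix A = [[β_k, γ_k],[γ_k, ε_k]]. Suppose the spectral radius of A equals 1 and −1 is an eigenvalue of A. Then every solution converges to a periodic solution of (not necessarily prime) period 2k: there exist sequences p, r : ℕ → [0,∞) with p_{n+2k} = p_n and r_{n+2k} = r_n for all n such that lim_{n→∞}(x_n − p_n) = 0 and lim_{n→∞}(y_n − r_n) = 0. Furthermore, there exists a solution that is periodic of prime period 2k (periodic with period 2k and with no smaller positive period). -/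
open Filter

open ENNReal NNReal in
private lemma stmt15_coeffs {β γ ε : ℝ} (hβ : 0 ≤ β) (hγ : 0 ≤ γ) (hε : 0 ≤ ε)
    (hρ : spectralRadius ℝ !![β, γ; γ, ε] = 1)
    (heig : (-1 : ℝ) ∈ spectrum ℝ !![β, γ; γ, ε]) : β = 0 ∧ ε = 0 ∧ γ = 1 := by
  have hdet : (-1 - β) * (-1 - ε) - γ * γ = 0 := by
    rw [spectrum.mem_iff] at heig
    by_contra h
    apply heig
    rw [Matrix.isUnit_iff_isUnit_det]
    apply isUnit_iff_ne_zero.mpr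
    rw [show (algebraMap ℝ (Matrix (Fin 2) (Fin 2) ℝ)) (-1) - !![β, γ; γ, ε]
        = !![-1 - β, -γ; -γ, -1 - ε] by
      ext i j; fin_cases i <;> fin_cases j <;>
        simp [Matrix.algebraMap_matrix_apply]]
    rw [Matrix.det_fin_two_of]
    intro h'; apply h; nlinarith [h']
  have hμ : (1 + β + ε) ∈ spectrum ℝ !![β, γ; γ, ε] := by
    rw [spectrum.mem_iff]
    intro h
    rw [Matrix.isUnit_iff_isUnit_det] at h
    rw [show (algebraMap ℝ (Matrix (Fin 2) (Fin 2) ℝ)) (1 + β + ε) - !![β, γ; γ, ε]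
        = !![1 + ε, -γ; -γ, 1 + β] by
      ext i j; fin_cases i <;> fin_cases j <;>
        simp [Matrix.algebraMap_matrix_apply] <;> ring] at h
    rw [Matrix.det_fin_two_of] at h
    have : (1 + ε) * (1 + β) - (-γ)*(-γ) = 0 := by nlinarith
    rw [this] at h
    exact not_isUnit_zero h
  have hle : (↑‖(1 + β + ε : ℝ)‖₊ : ℝ≥0∞) ≤ spectralRadius ℝ !![β, γ; γ, ε] := by
    exact le_iSup₂ (f := fun k (_ : k ∈ spectrum ℝ !![β, γ; γ, ε]) => (‖k‖₊ : ℝ≥0∞))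
      (1 + β + ε) hμ
  have hle' : 1 + β + ε ≤ 1 := by
    rw [hρ] at hle
    have h2 : ‖(1 + β + ε : ℝ)‖₊ ≤ 1 := by exact_mod_cast hle
    have h3 : ‖(1 + β + ε : ℝ)‖ ≤ 1 := by exact_mod_cast h2
    rw [Real.norm_eq_abs, abs_of_nonneg (by linarith)] at h3
    exact h3
  have hβ0 : β = 0 := by linarith
  have hε0 : ε = 0 := by linarith
  refine ⟨hβ0, hε0, ?_⟩
  nlinarith [hdet, hβ0, hε0]

private lemma stmt15_residues {q : ℕ} (hq : 0 < q) {f : ℕ → ℝ}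
    (h : ∀ i, i < q → Tendsto (fun m => f (i + q * m)) atTop (nhds 0)) :
    Tendsto f atTop (nhds 0) := by
  rw [Metric.tendsto_atTop]
  intro ε hε
  have key : ∀ i, i < q → ∃ N, ∀ m ≥ N, dist (f (i + q * m)) 0 < ε := fun i hi =>
    Metric.tendsto_atTop.mp (h i hi) ε hε
  choose N hN using key
  classical
  let g : ℕ → ℕ := fun i => if hi : i < q then N i hi else 0
  obtain ⟨S, hS⟩ : ∃ S, ∀ i, i < q → g i ≤ S :=
    ⟨(Finset.range q).sup g, fun i hi => Finset.le_sup (Finset.mem_range.mpr hi)⟩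
  refine ⟨q * S + q, fun n hn => ?_⟩
  have hi : n % q < q := Nat.mod_lt _ hq
  have hrep : n % q + q * (n / q) = n := Nat.mod_add_div n q
  have hm : S ≤ n / q := by
    by_contra hcon
    push_neg at hcon
    have h2 : q * (n / q) ≤ q * S := Nat.mul_le_mul_left q (by omega)
    omega
  have hNle : N (n % q) hi ≤ n / q := by
    have hg : g (n % q) = N (n % q) hi := dif_pos hi
    have := hS (n % q) hi
    omega
  have := hN (n % q) hi (n / q) hNle
  rwa [hrep] at this


/-- Planar rational system with `δ_k = γ_k` and associated symmetric
matrix `A = [[β, γ], [γ, ε]]`. Suppose the spectral radius of `A` equals `1` and `−1` is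
an eigenvalue of `A`. Then every solution converges to a periodic solution of (not
necessarily prime) period `2k`, and there exists a solution periodic of prime period `2k`. -/

theorem stmt_15 {k : ℕ} (hk : 2 ≤ k) (β γ ε : ℝ)
    (hβ : 0 ≤ β) (hγ : 0 ≤ γ) (hε : 0 ≤ ε)
    (B C D E : ℕ → ℝ) (hB : ∀ j, 0 ≤ B j) (hC : ∀ j, 0 ≤ C j)
    (hD : ∀ j, 0 ≤ D j) (hE : ∀ j, 0 ≤ E j)
    (hρ : spectralRadius ℝ !![β, γ; γ, ε] = 1)
    (heig : (-1 : ℝ) ∈ spectrum ℝ !![β, γ; γ, ε]) :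
    (∀ x y : ℕ → ℝ, IsPlanarSolution k β γ ε B C D E x y →
      ∃ p r : ℕ → ℝ, (∀ n, 0 ≤ p n) ∧ (∀ n, 0 ≤ r n) ∧
        (∀ n, p (n + 2 * k) = p n) ∧ (∀ n, r (n + 2 * k) = r n) ∧
        Tendsto (fun n => x n - p n) atTop (nhds 0) ∧
        Tendsto (fun n => y n - r n) atTop (nhds 0)) ∧
    (∃ x y : ℕ → ℝ, IsPlanarSolution k β γ ε B C D E x y ∧
      (∀ n, x (n + 2 * k) = x n ∧ y (n + 2 * k) = y n) ∧
      ¬ ∃ d : ℕ, 0 < d ∧ d < 2 * k ∧ ∀ n, x (n + d) = x n ∧ y (n + d) = y n) := by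
  obtain ⟨hβ0, hε0, hγ1⟩ := stmt15_coeffs hβ hγ hε hρ heig
  subst hβ0; subst hε0; subst hγ1
  have hq : 0 < 2 * k := by omega
  constructor
  · -- every solution converges to a 2k-periodic solution
    rintro x y ⟨hx0, hy0, hxe, hye⟩
    have hstepx : ∀ n, x (n + 2 * k) ≤ x n := by
      intro n
      have h1 : x (n + 2 * k) ≤ y (n + k) := by
        have he := hxe (n + 2 * k) (by omega)
        rw [show n + 2 * k - k = n + k by omega] at he
        rw [he, show (0 : ℝ) * x (n + k) + 1 * y (n + k) = y (n + k) by ring]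
        apply div_le_self (hy0 _)
        have s1 : 0 ≤ ∑ j ∈ Finset.Ico 1 k, B j * x (n + 2 * k - j) :=
          Finset.sum_nonneg fun j _ => mul_nonneg (hB j) (hx0 _)
        have s2 : 0 ≤ ∑ j ∈ Finset.Ico 1 k, C j * y (n + 2 * k - j) :=
          Finset.sum_nonneg fun j _ => mul_nonneg (hC j) (hy0 _)
        linarith
      have h2 : y (n + k) ≤ x n := by
        have he := hye (n + k) (by omega)
        rw [show n + k - k = n by omega] at he
        rw [he, show (1 : ℝ) * x n + 0 * y n = x n by ring]
        apply div_le_self (hx0 _)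
        have s1 : 0 ≤ ∑ j ∈ Finset.Ico 1 k, D j * x (n + k - j) :=
          Finset.sum_nonneg fun j _ => mul_nonneg (hD j) (hx0 _)
        have s2 : 0 ≤ ∑ j ∈ Finset.Ico 1 k, E j * y (n + k - j) :=
          Finset.sum_nonneg fun j _ => mul_nonneg (hE j) (hy0 _)
        linarith
      linarith
    have hstepy : ∀ n, y (n + 2 * k) ≤ y n := by
      intro n
      have h1 : y (n + 2 * k) ≤ x (n + k) := by
        have he := hye (n + 2 * k) (by omega)
        rw [show n + 2 * k - k = n + k by omega] at he
        rw [he, show (1 : ℝ) * x (n + k) + 0 * y (n + k) = x (n + k) by ring]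
        apply div_le_self (hx0 _)
        have s1 : 0 ≤ ∑ j ∈ Finset.Ico 1 k, D j * x (n + 2 * k - j) :=
          Finset.sum_nonneg fun j _ => mul_nonneg (hD j) (hx0 _)
        have s2 : 0 ≤ ∑ j ∈ Finset.Ico 1 k, E j * y (n + 2 * k - j) :=
          Finset.sum_nonneg fun j _ => mul_nonneg (hE j) (hy0 _)
        linarith
      have h2 : x (n + k) ≤ y n := by
        have he := hxe (n + k) (by omega)
        rw [show n + k - k = n by omega] at he
        rw [he, show (0 : ℝ) * x n + 1 * y n = y n by ring]
        apply div_le_self (hy0 _)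
        have s1 : 0 ≤ ∑ j ∈ Finset.Ico 1 k, B j * x (n + k - j) :=
          Finset.sum_nonneg fun j _ => mul_nonneg (hB j) (hx0 _)
        have s2 : 0 ≤ ∑ j ∈ Finset.Ico 1 k, C j * y (n + k - j) :=
          Finset.sum_nonneg fun j _ => mul_nonneg (hC j) (hy0 _)
        linarith
      linarith
    have hmonox : ∀ i, Antitone fun m => x (i + 2 * k * m) := fun i =>
      antitone_nat_of_succ_le fun m => by
        rw [show i + 2 * k * (m + 1) = i + 2 * k * m + 2 * k by ring]
        exact hstepx _
    have hmonoy : ∀ i, Antitone fun m => y (i + 2 * k * m) := fun i =>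
      antitone_nat_of_succ_le fun m => by
        rw [show i + 2 * k * (m + 1) = i + 2 * k * m + 2 * k by ring]
        exact hstepy _
    have hbddx : ∀ i, BddBelow (Set.range fun m => x (i + 2 * k * m)) := fun i =>
      ⟨0, by rintro z ⟨m, rfl⟩; exact hx0 _⟩
    have hbddy : ∀ i, BddBelow (Set.range fun m => y (i + 2 * k * m)) := fun i =>
      ⟨0, by rintro z ⟨m, rfl⟩; exact hy0 _⟩
    have hmod : ∀ i, i < 2 * k → ∀ m : ℕ, (i + 2 * k * m) % (2 * k) = i := fun i hi m => by
      rw [Nat.add_mul_mod_self_left, Nat.mod_eq_of_lt hi]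
    refine ⟨fun n => ⨅ m, x (n % (2 * k) + 2 * k * m),
            fun n => ⨅ m, y (n % (2 * k) + 2 * k * m),
            fun n => le_ciInf fun m => hx0 _, fun n => le_ciInf fun m => hy0 _,
            fun n => by simp [Nat.add_mod_right], fun n => by simp [Nat.add_mod_right],
            ?_, ?_⟩
    · apply stmt15_residues hq
      intro i hi
      have hlim := tendsto_atTop_ciInf (hmonox i) (hbddx i)
      have heq : (fun m => x (i + 2 * k * m) - ⨅ m', x ((i + 2 * k * m) % (2 * k) + 2 * k * m'))
          = fun m => x (i + 2 * k * m) - ⨅ m', x (i + 2 * k * m') := by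
        funext m; rw [hmod i hi m]
      show Tendsto (fun m => x (i + 2 * k * m)
        - ⨅ m', x ((i + 2 * k * m) % (2 * k) + 2 * k * m')) atTop (nhds 0)
      rw [heq]
      simpa using hlim.sub (tendsto_const_nhds (x := ⨅ m, x (i + 2 * k * m)))
    · apply stmt15_residues hq
      intro i hi
      have hlim := tendsto_atTop_ciInf (hmonoy i) (hbddy i)
      have heq : (fun m => y (i + 2 * k * m) - ⨅ m', y ((i + 2 * k * m) % (2 * k) + 2 * k * m'))
          = fun m => y (i + 2 * k * m) - ⨅ m', y (i + 2 * k * m') := by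
        funext m; rw [hmod i hi m]
      show Tendsto (fun m => y (i + 2 * k * m)
        - ⨅ m', y ((i + 2 * k * m) % (2 * k) + 2 * k * m')) atTop (nhds 0)
      rw [heq]
      simpa using hlim.sub (tendsto_const_nhds (x := ⨅ m, y (i + 2 * k * m)))
  · -- a prime-period-2k solution
    classical
    refine ⟨fun n => if n % (2 * k) = 0 then 1 else 0,
            fun n => if n % (2 * k) = k then 1 else 0,
            ⟨fun n => by dsimp only; split <;> norm_num,
             fun n => by dsimp only; split <;> norm_num, ?_, ?_⟩, ?_, ?_⟩
    · -- x recurrence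
      intro n hn
      dsimp only
      by_cases h0 : n % (2 * k) = 0
      · obtain ⟨t, ht⟩ : 2 * k ∣ n := Nat.dvd_of_mod_eq_zero h0
        have ht1 : 1 ≤ t := by
          rcases Nat.eq_zero_or_pos t with rfl | h; · simp at ht; omega
          · exact h
        obtain ⟨s, rfl⟩ : ∃ s, t = s + 1 := ⟨t - 1, by omega⟩
        have hn' : n = 2 * k * s + 2 * k := by rw [ht, Nat.mul_succ]
        have hyk : (n - k) % (2 * k) = k := by
          rw [show n - k = 2 * k * s + k by omega, Nat.mul_add_mod,
            Nat.mod_eq_of_lt (by omega)]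
        have hmodj : ∀ j, 1 ≤ j → j < k → (n - j) % (2 * k) = 2 * k - j := by
          intro j hj1 hj2
          rw [show n - j = 2 * k * s + (2 * k - j) by omega, Nat.mul_add_mod,
            Nat.mod_eq_of_lt (by omega)]
        have hsum1 : ∑ j ∈ Finset.Ico 1 k,
            B j * (if (n - j) % (2 * k) = 0 then (1 : ℝ) else 0) = 0 :=
          Finset.sum_eq_zero fun j hj => by
            rw [Finset.mem_Ico] at hj
            rw [hmodj j hj.1 hj.2, if_neg (by omega), mul_zero]
        have hsum2 : ∑ j ∈ Finset.Ico 1 k,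
            C j * (if (n - j) % (2 * k) = k then (1 : ℝ) else 0) = 0 :=
          Finset.sum_eq_zero fun j hj => by
            rw [Finset.mem_Ico] at hj
            rw [hmodj j hj.1 hj.2, if_neg (by omega), mul_zero]
        rw [hsum1, hsum2, if_pos h0, if_pos hyk]
        norm_num
      · have hyk : (n - k) % (2 * k) ≠ k := by
          intro hc
          have hd := Nat.div_add_mod (n - k) (2 * k)
          rw [hc] at hd
          apply h0
          rw [show n = 2 * k * ((n - k) / (2 * k) + 1) by rw [Nat.mul_succ]; omega,
            Nat.mul_mod_right]
        rw [if_neg h0, if_neg hyk]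
        norm_num
    · -- y recurrence
      intro n hn
      dsimp only
      by_cases h0 : n % (2 * k) = k
      · have hd := Nat.div_add_mod n (2 * k)
        rw [h0] at hd
        set s := n / (2 * k) with hs
        have hn' : n = 2 * k * s + k := by omega
        have hxk : (n - k) % (2 * k) = 0 := by
          rw [show n - k = 2 * k * s by omega, Nat.mul_mod_right]
        have hmodj : ∀ j, 1 ≤ j → j < k → (n - j) % (2 * k) = k - j := by
          intro j hj1 hj2
          rw [show n - j = 2 * k * s + (k - j) by omega, Nat.mul_add_mod,
            Nat.mod_eq_of_lt (by omega)]
        have hsum1 : ∑ j ∈ Finset.Ico 1 k,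
            D j * (if (n - j) % (2 * k) = 0 then (1 : ℝ) else 0) = 0 :=
          Finset.sum_eq_zero fun j hj => by
            rw [Finset.mem_Ico] at hj
            rw [hmodj j hj.1 hj.2, if_neg (by omega), mul_zero]
        have hsum2 : ∑ j ∈ Finset.Ico 1 k,
            E j * (if (n - j) % (2 * k) = k then (1 : ℝ) else 0) = 0 :=
          Finset.sum_eq_zero fun j hj => by
            rw [Finset.mem_Ico] at hj
            rw [hmodj j hj.1 hj.2, if_neg (by omega), mul_zero]
        rw [hsum1, hsum2, if_pos h0, if_pos hxk]
        norm_num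
      · have hxk : (n - k) % (2 * k) ≠ 0 := by
          intro hc
          obtain ⟨s, hs⟩ : 2 * k ∣ (n - k) := Nat.dvd_of_mod_eq_zero hc
          apply h0
          rw [show n = 2 * k * s + k by omega, Nat.mul_add_mod,
            Nat.mod_eq_of_lt (by omega)]
        rw [if_neg h0, if_neg hxk]
        norm_num
    · intro n
      constructor <;> simp [Nat.add_mod_right]
    · rintro ⟨d, hd0, hd2k, hper⟩
      have h1 := (hper 0).1
      rw [zero_add] at h1
      dsimp only at h1
      rw [if_neg (by rw [Nat.mod_eq_of_lt hd2k]; omega),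
        if_pos (by simp)] at h1
      norm_num at h1
end

section
/- Consider the planar rational system with δ_k = γ_k and associated symmetric matrix A = [[β_k, γ_k],[γ_k, ε_k]]. If the spectral radius of A is strictly greater than 1, then there exists a choice of nonnegative initial conditions such that for the corresponding solution the sequence (x_n + y_n)_{n=1}^∞ is unbounded. -/
lemma aux_sol {k : ℕ} (hk : 2 ≤ k) (β γ ε : ℝ)
    (B C D E : ℕ → ℝ)
    (l v1 v2 : ℝ) (hl : 1 < l) (hv1 : 0 ≤ v1) (hv2 : 0 ≤ v2) (hsum : 0 < v1 + v2)
    (e1 : β * v1 + γ * v2 = l * v1) (e2 : γ * v1 + ε * v2 = l * v2) :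
    ∃ x y : ℕ → ℝ, IsPlanarSolution k β γ ε B C D E x y ∧
      ¬ BddAbove (Set.range fun n => x n + y n) := by
  have hk0 : 0 < k := by omega
  have hl0 : (0:ℝ) ≤ l := by linarith
  set x : ℕ → ℝ := fun n => if k ∣ n then l ^ (n / k) * v1 else 0 with hx
  set y : ℕ → ℝ := fun n => if k ∣ n then l ^ (n / k) * v2 else 0 with hy
  have hnd : ∀ n j : ℕ, k ≤ n → k ∣ n → 1 ≤ j → j < k → ¬ k ∣ (n - j) := by
    intro n j hn hdn hj1 hjk hdv
    have hjn : j ≤ n := le_trans (le_of_lt hjk) hn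
    have : k ∣ n - (n - j) := Nat.dvd_sub hdn hdv
    rw [Nat.sub_sub_self hjn] at this
    exact absurd (Nat.le_of_dvd hj1 this) (not_le.mpr hjk)
  have hsz : ∀ (F : ℕ → ℝ) (z : ℕ → ℝ) n, k ≤ n → k ∣ n →
      (∀ m, ¬ k ∣ m → z m = 0) →
      (∑ j ∈ Finset.Ico 1 k, F j * z (n - j)) = 0 := by
    intro F z n hn hdn hz
    apply Finset.sum_eq_zero
    intro j hj
    rw [Finset.mem_Ico] at hj
    rw [hz _ (hnd n j hn hdn hj.1 hj.2), mul_zero]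
  have hx0 : ∀ m, ¬ k ∣ m → x m = 0 := by intro m hm; simp [hx, hm]
  have hy0 : ∀ m, ¬ k ∣ m → y m = 0 := by intro m hm; simp [hy, hm]
  refine ⟨x, y, ⟨?_, ?_, ?_, ?_⟩, ?_⟩
  · intro n; simp only [hx]; split <;> positivity
  · intro n; simp only [hy]; split <;> positivity
  · intro n hn
    by_cases hdn : k ∣ n
    · obtain ⟨m, rfl⟩ := hdn
      have hm1 : 1 ≤ m := by
        rcases Nat.eq_zero_or_pos m with rfl | h
        · omega
        · exact h
      have hdvd : k ∣ k * m := Dvd.intro m rfl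
      have hdvd' : k ∣ k * m - k := Nat.dvd_sub hdvd dvd_rfl
      have hsub : k * m - k = k * (m - 1) := by
        rw [Nat.mul_sub, mul_one]
      rw [hsz B x _ hn hdvd hx0, hsz C y _ hn hdvd hy0]
      have hdiv : (k * m - k) / k = m - 1 := by
        rw [hsub, Nat.mul_div_cancel_left _ hk0]
      have hxv : x (k * m - k) = l ^ (m - 1) * v1 := by
        simp [hx, hdvd', hdiv]
      have hyv : y (k * m - k) = l ^ (m - 1) * v2 := by
        simp [hy, hdvd', hdiv]
      have hxn : x (k * m) = l ^ m * v1 := by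
        simp [hx, Dvd.intro m rfl, Nat.mul_div_cancel_left _ hk0]
      rw [hxn, hxv, hyv]
      have hpow : l ^ m = l * l ^ (m - 1) := by
        conv_lhs => rw [show m = (m - 1) + 1 by omega]
        rw [pow_succ]; ring
      rw [hpow, add_zero, add_zero, div_one]
      linear_combination (-(l ^ (m-1))) * e1
    · rw [hx0 n hdn]
      have : ¬ k ∣ (n - k) := by
        intro h
        exact hdn (by
          have := Nat.dvd_add h (dvd_refl k)
          rwa [Nat.sub_add_cancel hn] at this)
      rw [hx0 _ this, hy0 _ this]
      simp
  · intro n hn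
    by_cases hdn : k ∣ n
    · obtain ⟨m, rfl⟩ := hdn
      have hm1 : 1 ≤ m := by
        rcases Nat.eq_zero_or_pos m with rfl | h
        · omega
        · exact h
      have hdvd : k ∣ k * m := Dvd.intro m rfl
      have hdvd' : k ∣ k * m - k := Nat.dvd_sub hdvd dvd_rfl
      have hsub : k * m - k = k * (m - 1) := by
        rw [Nat.mul_sub, mul_one]
      rw [hsz D x _ hn hdvd hx0, hsz E y _ hn hdvd hy0]
      have hdiv : (k * m - k) / k = m - 1 := by
        rw [hsub, Nat.mul_div_cancel_left _ hk0]
      have hxv : x (k * m - k) = l ^ (m - 1) * v1 := by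
        simp [hx, hdvd', hdiv]
      have hyv : y (k * m - k) = l ^ (m - 1) * v2 := by
        simp [hy, hdvd', hdiv]
      have hyn : y (k * m) = l ^ m * v2 := by
        simp [hy, Dvd.intro m rfl, Nat.mul_div_cancel_left _ hk0]
      rw [hyn, hxv, hyv]
      have hpow : l ^ m = l * l ^ (m - 1) := by
        conv_lhs => rw [show m = (m - 1) + 1 by omega]
        rw [pow_succ]; ring
      rw [hpow, add_zero, add_zero, div_one]
      linear_combination (-(l ^ (m-1))) * e2
    · rw [hy0 n hdn]
      have : ¬ k ∣ (n - k) := by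
        intro h
        exact hdn (by
          have := Nat.dvd_add h (dvd_refl k)
          rwa [Nat.sub_add_cancel hn] at this)
      rw [hx0 _ this, hy0 _ this]
      simp
  · rintro ⟨M, hM⟩
    obtain ⟨m, hm⟩ := pow_unbounded_of_one_lt (M / (v1 + v2)) hl
    have hmem : l ^ m * (v1 + v2) ∈ Set.range fun n => x n + y n := by
      refine ⟨k * m, ?_⟩
      have hdvd : k ∣ k * m := Dvd.intro m rfl
      simp only [hx, hy, if_pos hdvd, Nat.mul_div_cancel_left _ hk0]
      ring
    nlinarith [hM hmem, (div_lt_iff₀ hsum).mp hm]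

/-- Planar rational system with `δ_k = γ_k` and associated symmetric
matrix `A = [[β, γ], [γ, ε]]`. If the spectral radius of `A` is strictly greater than `1`,
then there is a choice of nonnegative initial conditions whose solution makes the
sequence `(x_n + y_n)` unbounded. -/
theorem stmt_16 {k : ℕ} (hk : 2 ≤ k) (β γ ε : ℝ)
    (hβ : 0 ≤ β) (hγ : 0 ≤ γ) (hε : 0 ≤ ε)
    (B C D E : ℕ → ℝ) (hB : ∀ j, 0 ≤ B j) (hC : ∀ j, 0 ≤ C j)
    (hD : ∀ j, 0 ≤ D j) (hE : ∀ j, 0 ≤ E j)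
    (hρ : 1 < spectralRadius ℝ !![β, γ; γ, ε]) :
    ∃ x y : ℕ → ℝ, IsPlanarSolution k β γ ε B C D E x y ∧
      ¬ BddAbove (Set.range fun n => x n + y n) := by
  -- extract an eigenvalue μ with |μ| > 1
  obtain ⟨μ, habs, hdet⟩ :
      ∃ μ : ℝ, 1 < |μ| ∧ (μ - β) * (μ - ε) - γ * γ = 0 := by
    rw [spectralRadius] at hρ
    obtain ⟨μ, hμ⟩ := lt_iSup_iff.mp hρ
    by_cases hmem : μ ∈ spectrum ℝ !![β, γ; γ, ε]
    swap
    · simp [hmem] at hμ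
    simp only [iSup_pos hmem] at hμ
    have habs : 1 < |μ| := by
      have h1 : (1 : NNReal) < ‖μ‖₊ := by exact_mod_cast hμ
      have := (NNReal.coe_lt_coe.mpr h1)
      simpa [Real.norm_eq_abs] using this
    refine ⟨μ, habs, ?_⟩
    rw [spectrum.mem_iff] at hmem
    rw [Matrix.isUnit_iff_isUnit_det, isUnit_iff_ne_zero, not_not] at hmem
    have halg : (algebraMap ℝ (Matrix (Fin 2) (Fin 2) ℝ) μ) = !![μ, 0; 0, μ] := by
      ext i j
      fin_cases i <;> fin_cases j <;>
        simp [Matrix.algebraMap_matrix_apply, Matrix.one_apply]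
    rw [halg] at hmem
    have : (!![μ, 0; 0, μ] - !![β, γ; γ, ε]) = !![μ - β, -γ; -γ, μ - ε] := by
      ext i j
      fin_cases i <;> fin_cases j <;> simp
    rw [this, Matrix.det_fin_two_of] at hmem
    linarith [hmem]
  by_cases hγ0 : γ = 0
  · -- diagonal case: μ = β or μ = ε
    subst hγ0
    have : (μ - β) * (μ - ε) = 0 := by linarith
    rcases mul_eq_zero.mp this with h | h
    · have hμβ : μ = β := by linarith
      have hβ1 : 1 < β := by
        rcases abs_cases μ with ⟨h1, h2⟩ | ⟨h1, h2⟩ <;> [linarith; linarith]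
      exact aux_sol hk β 0 ε B C D E β 1 0 hβ1 zero_le_one le_rfl (by norm_num)
        (by ring) (by ring)
    · have hμε : μ = ε := by linarith
      have hε1 : 1 < ε := by
        rcases abs_cases μ with ⟨h1, h2⟩ | ⟨h1, h2⟩ <;> [linarith; linarith]
      exact aux_sol hk β 0 ε B C D E ε 0 1 hε1 le_rfl zero_le_one (by norm_num)
        (by ring) (by ring)
  · -- γ > 0: use top eigenvalue
    have hγpos : 0 < γ := lt_of_le_of_ne hγ (Ne.symm hγ0)
    set d : ℝ := (β - ε) ^ 2 + 4 * γ ^ 2 with hd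
    have hd0 : 0 ≤ d := by positivity
    set r : ℝ := Real.sqrt d with hr
    have hr0 : 0 ≤ r := Real.sqrt_nonneg d
    have hr2 : r ^ 2 = d := Real.sq_sqrt hd0
    set l : ℝ := ((β + ε) + r) / 2 with hl
    -- r = |2μ - (β+ε)|
    have hsq : (2 * μ - (β + ε)) ^ 2 = d := by
      rw [hd]; nlinarith [hdet]
    have hge1 : r ≥ 2 * μ - (β + ε) := by nlinarith [hsq, hr2, hr0]
    have hge2 : r ≥ (β + ε) - 2 * μ := by nlinarith [hsq, hr2, hr0]
    have hl1 : 1 < l := by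
      rcases abs_cases μ with ⟨h1, h2⟩ | ⟨h1, h2⟩
      · rw [h1] at habs; rw [hl]; linarith
      · rw [h1] at habs; rw [hl]; linarith
    have hlβ : β ≤ l := by
      have : |β - ε| ≤ r := by
        rw [hr, ← Real.sqrt_sq_eq_abs]
        apply Real.sqrt_le_sqrt
        rw [hd]; nlinarith [sq_nonneg γ]
      rcases abs_cases (β - ε) with ⟨h1, h2⟩ | ⟨h1, h2⟩ <;> rw [h1] at this <;>
        (rw [hl]; linarith)
    refine aux_sol hk β γ ε B C D E l γ (l - β) hl1 hγ (by linarith) (by linarith) ?_ ?_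
    · ring
    · -- γ*γ + ε*(l-β) = l*(l-β), i.e. γ² = (l-β)(l-ε)
      have key : l ^ 2 - (β + ε) * l = -(β * ε - γ ^ 2) := by
        have h2 : r ^ 2 = (β - ε) ^ 2 + 4 * γ ^ 2 := by rw [hr2, hd]
        rw [hl]
        linear_combination h2 / 4
      linear_combination -key
end

section
/- Fix an integer k ≥ 2, a real number γ > 0, and nonnegative real parameters B_j, C_j, D_j, E_j for j ∈ {1,…,k−1}. Let x, y : ℕ → [0,∞) be sequences with nonnegative initial conditions x_0,…,x_{k−1}, y_0,…,y_{k−1} satisfying, for all n ≥ k: x_n = γ y_{n−k} / (1 + Σ_{j=1}^{k−1} B_j x_{n−j} + Σ_{j=1}^{k−1} C_j y_{n−j}) and y_n = x_{n−k} / (γ(1 + Σ_{j=1}^{k−1} D_j x_{n−j} + Σ_{j=1}^{k−1} E_j y_{n−j})). Then x_n ≤ x_{n−2k} and y_n ≤ y_{n−2k} for all n ≥ 2k; consequently, for every a ∈ {0,1,…,2k−1}, the subsequences (x_{2kn+a})_{n≥0} and (y_{2kn+a})_{n≥0} are monotone decreasing and converge. -/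
open Filter

/-- Fix `k ≥ 2`, `γ > 0`, and nonnegative parameters `B_j, C_j, D_j,
E_j`. Let `x, y : ℕ → [0,∞)` satisfy, for all `n ≥ k`,
`x_n = γ y_{n−k} / (1 + Σ B_j x_{n−j} + Σ C_j y_{n−j})` and
`y_n = x_{n−k} / (γ (1 + Σ D_j x_{n−j} + Σ E_j y_{n−j}))`. Then `x_n ≤ x_{n−2k}` and
`y_n ≤ y_{n−2k}` for all `n ≥ 2k`; consequently, for every `a < 2k`, the subsequences
`(x_{2kn+a})` and `(y_{2kn+a})` are monotone decreasing and converge. -/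
theorem stmt_18 {k : ℕ} (hk : 2 ≤ k) (γ : ℝ) (hγ : 0 < γ)
    (B C D E : ℕ → ℝ) (hB : ∀ j, 0 ≤ B j) (hC : ∀ j, 0 ≤ C j)
    (hD : ∀ j, 0 ≤ D j) (hE : ∀ j, 0 ≤ E j)
    (x y : ℕ → ℝ) (hx : ∀ n, 0 ≤ x n) (hy : ∀ n, 0 ≤ y n)
    (hrecx : ∀ n, k ≤ n → x n = γ * y (n - k) /
      (1 + (∑ j ∈ Finset.Ico 1 k, B j * x (n - j)) +
        ∑ j ∈ Finset.Ico 1 k, C j * y (n - j)))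
    (hrecy : ∀ n, k ≤ n → y n = x (n - k) /
      (γ * (1 + (∑ j ∈ Finset.Ico 1 k, D j * x (n - j)) +
        ∑ j ∈ Finset.Ico 1 k, E j * y (n - j)))) :
    (∀ n, 2 * k ≤ n → x n ≤ x (n - 2 * k) ∧ y n ≤ y (n - 2 * k)) ∧
    ∀ a < 2 * k,
      (Antitone fun n => x (2 * k * n + a)) ∧
      (Antitone fun n => y (2 * k * n + a)) ∧
      (∃ lx : ℝ, Tendsto (fun n => x (2 * k * n + a)) atTop (nhds lx)) ∧
      (∃ ly : ℝ, Tendsto (fun n => y (2 * k * n + a)) atTop (nhds ly)) := by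
  have hxle : ∀ n, k ≤ n → x n ≤ γ * y (n - k) := by
    intro n hn
    rw [hrecx n hn]
    apply div_le_self (mul_nonneg hγ.le (hy _))
    have h1 : 0 ≤ ∑ j ∈ Finset.Ico 1 k, B j * x (n - j) :=
      Finset.sum_nonneg fun j _ => mul_nonneg (hB j) (hx _)
    have h2 : 0 ≤ ∑ j ∈ Finset.Ico 1 k, C j * y (n - j) :=
      Finset.sum_nonneg fun j _ => mul_nonneg (hC j) (hy _)
    linarith
  have hyle : ∀ n, k ≤ n → y n ≤ x (n - k) / γ := by
    intro n hn
    rw [hrecy n hn]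
    have h1 : 0 ≤ ∑ j ∈ Finset.Ico 1 k, D j * x (n - j) :=
      Finset.sum_nonneg fun j _ => mul_nonneg (hD j) (hx _)
    have h2 : 0 ≤ ∑ j ∈ Finset.Ico 1 k, E j * y (n - j) :=
      Finset.sum_nonneg fun j _ => mul_nonneg (hE j) (hy _)
    gcongr
    · exact hx _
    · nlinarith
  have key : ∀ n, 2 * k ≤ n → x n ≤ x (n - 2 * k) ∧ y n ≤ y (n - 2 * k) := by
    intro n hn
    have hkn : k ≤ n := by omega
    have hkn' : k ≤ n - k := by omega
    have heq : n - k - k = n - 2 * k := by omega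
    constructor
    · calc x n ≤ γ * y (n - k) := hxle n hkn
        _ ≤ γ * (x (n - k - k) / γ) := by
            have := hyle (n - k) hkn'
            nlinarith
        _ = x (n - 2 * k) := by rw [heq]; field_simp
    · calc y n ≤ x (n - k) / γ := hyle n hkn
        _ ≤ (γ * y (n - k - k)) / γ := by
            have := hxle (n - k) hkn'
            gcongr
        _ = y (n - 2 * k) := by rw [heq]; field_simp
  refine ⟨key, fun a ha => ?_⟩
  have hstep : ∀ (f : ℕ → ℝ), (∀ n, 2 * k ≤ n → f n ≤ f (n - 2 * k)) →
      Antitone fun n => f (2 * k * n + a) := by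
    intro f hf
    apply antitone_nat_of_succ_le
    intro n
    have h1 : 2 * k ≤ 2 * k * (n + 1) + a := by nlinarith
    have h2 : 2 * k * (n + 1) + a - 2 * k = 2 * k * n + a := by ring_nf; omega
    have := hf (2 * k * (n + 1) + a) h1
    rwa [h2] at this
  have hax := hstep x (fun n hn => (key n hn).1)
  have hay := hstep y (fun n hn => (key n hn).2)
  refine ⟨hax, hay, ?_, ?_⟩
  · exact ⟨_, tendsto_atTop_ciInf hax ⟨0, by rintro _ ⟨n, rfl⟩; exact hx _⟩⟩
  · exact ⟨_, tendsto_atTop_ciInf hay ⟨0, by rintro _ ⟨n, rfl⟩; exact hy _⟩⟩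
end
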